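/- arXiv:1704.08730 — 6 statements merged into one kernel-verified Lean document; each statement's English description precedes it below -/
import Mathlib

section
/- Let c = (c₁,c₂,c₃) ∈ ℝ³ and suppose the ODE (★) admits a C¹ solution on (-1,1). Then c₁ ≥ -1, c₂ ≥ -1, and c₃ ≥ c̄₃(c₁,c₂); that is, c ∈ J. -/
/-!
With `V = U + 2x` the equation reads `(1 - x²)V' = -V²/2 + g(x)` with `g(-1) = 2(1 + c₁)`. If
`c₁ < -1` then near `-1` we get `(1 - x²)V' ≤ -m(1 + V²)`, so `arctan V` decreases at least like
`-(m/2) log(1 + x)` and cannot stay bounded as `x → -1⁺`. The symmetry `U(x) ↦ -U(-x)`, which swaps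
`c₁` and `c₂`, gives `c₂ ≥ -1`.

For the third inequality write `c₁ = s² - 1`, `c₂ = t² - 1` with `s, t ≥ 0`. The affine function
`U₀(x) = (s - t) - (s + t + 2)x` solves the equation with `c₃ = c̄₃`, and with
`P = (1 - x)ᵗ(1 + x)ˢ` the function `z = P(U - U₀)` satisfies the Riccati equation
`z' = -z²/(2P(1 - x²)) - (c̄₃ - c₃)P`. If `c₃ < c̄₃`, then `z` is strictly decreasing, and a
positive value of `z` would make `1/z` decrease like `log(1 + x)` towards `-1` although it stays
positive. Hence `z ≤ 0`, by symmetry also `z ≥ 0`, contradicting strict monotonicity.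
-/
open Set Filter Real Topology

noncomputable section

/-- The Riccati-type ODE (★):
`(1-x²)U'(x) + 2x·U(x) + (1/2)U(x)² = c₁(1-x) + c₂(1+x) + c₃(1-x²)` at the point `x`. -/
def StarEq (c₁ c₂ c₃ : ℝ) (U : ℝ → ℝ) (x : ℝ) : Prop :=
  (1 - x ^ 2) * deriv U x + 2 * x * U x + (1 / 2) * (U x) ^ 2
    = c₁ * (1 - x) + c₂ * (1 + x) + c₃ * (1 - x ^ 2)

/-- `U` is a C¹ solution of (★) on the set `s`. -/
def IsSolOn (c₁ c₂ c₃ : ℝ) (U : ℝ → ℝ) (s : Set ℝ) : Prop :=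
  ContDiffOn ℝ 1 U s ∧ ∀ x ∈ s, StarEq c₁ c₂ c₃ U x

/-- `c̄₃(c₁,c₂) = -(1/2)(√(1+c₁)+√(1+c₂))(√(1+c₁)+√(1+c₂)+2)`. -/
def cbar (c₁ c₂ : ℝ) : ℝ :=
  -(1 / 2) * (Real.sqrt (1 + c₁) + Real.sqrt (1 + c₂)) *
    (Real.sqrt (1 + c₁) + Real.sqrt (1 + c₂) + 2)

/-- `J = {c ∈ ℝ³ : c₁ ≥ -1, c₂ ≥ -1, c₃ ≥ c̄₃(c₁,c₂)}`. -/
def Jset : Set (ℝ × ℝ × ℝ) := {c | -1 ≤ c.1 ∧ -1 ≤ c.2.1 ∧ cbar c.1 c.2.1 ≤ c.2.2}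

def tau1 (c₁ : ℝ) : ℝ := 2 - 2 * Real.sqrt (1 + c₁)
def tau2 (c₁ : ℝ) : ℝ := 2 + 2 * Real.sqrt (1 + c₁)
def tau1' (c₂ : ℝ) : ℝ := -2 - 2 * Real.sqrt (1 + c₂)
def tau2' (c₂ : ℝ) : ℝ := -2 + 2 * Real.sqrt (1 + c₂)

theorem not_bddBelow_of_div_sub_le_deriv {f f' : ℝ → ℝ} {a b K : ℝ} (hab : a < b) (hK : 0 < K)
    (hf : ∀ x ∈ Ioo a b, HasDerivAt f (f' x) x) (hf' : ∀ x ∈ Ioo a b, K / (x - a) ≤ f' x) :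
    ¬BddBelow (f '' Ioo a b) := by
  rintro ⟨B, hB⟩
  set g : ℝ → ℝ := fun x => f x - K * log (x - a)
  have hg : ∀ x ∈ Ioo a b, HasDerivAt g (f' x - K * (1 / (x - a))) x := fun x hx =>
    (hf x hx).sub ((((hasDerivAt_id' x).sub_const a).log (sub_pos.2 hx.1).ne').const_mul K)
  have hmono : MonotoneOn g (Ioo a b) := by
    refine monotoneOn_of_hasDerivWithinAt_nonneg (f' := fun x => f' x - K * (1 / (x - a)))
      (convex_Ioo a b)
      (fun x hx => (hg x hx).continuousAt.continuousWithinAt) ?_ ?_ <;>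
      simp only [interior_Ioo] <;> intro x hx
    · exact (hg x hx).hasDerivWithinAt
    · rw [mul_one_div, sub_nonneg]
      exact hf' x hx
  obtain ⟨c, hac, hcb⟩ := exists_between hab
  have hlog : Tendsto (fun x => log (x - a)) (𝓝[>] a) atBot :=
    tendsto_log_nhdsGT_zero.comp <| tendsto_nhdsWithin_iff.2
      ⟨((continuous_sub_right a).tendsto' a 0 (sub_self a)).mono_left nhdsWithin_le_nhds,
        eventually_nhdsWithin_of_forall fun x hx => sub_pos.2 (show a < x from hx)⟩
  have hsmall : ∀ᶠ x in 𝓝[>] a, g c + K * log (x - a) < B :=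
    (tendsto_atBot_add_const_left _ (g c) (hlog.const_mul_atBot hK)).eventually_lt_atBot B
  obtain ⟨x, hxB, hxc⟩ := (hsmall.and (Ioo_mem_nhdsGT hac)).exists
  have hxab : x ∈ Ioo a b := ⟨hxc.1, hxc.2.trans hcb⟩
  have hgx : g x ≤ g c := hmono hxab ⟨hac, hcb⟩ hxc.2.le
  have := hB ⟨x, hxab, rfl⟩
  simp only [g] at hgx
  linarith

section Solutions

variable {c₁ c₂ c₃ : ℝ} {U : ℝ → ℝ}

theorem IsSolOn.hasDerivAt {s : Set ℝ} (hU : IsSolOn c₁ c₂ c₃ U s) (hs : IsOpen s) {x : ℝ}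
    (hx : x ∈ s) : HasDerivAt U (deriv U x) x :=
  ((hU.1.differentiableOn one_ne_zero).differentiableAt (hs.mem_nhds hx)).hasDerivAt

theorem IsSolOn.reflect (hU : IsSolOn c₁ c₂ c₃ U (Ioo (-1) 1)) :
    IsSolOn c₂ c₁ c₃ (fun x => -U (-x)) (Ioo (-1) 1) := by
  have hneg : MapsTo (fun x : ℝ => -x) (Ioo (-1) 1) (Ioo (-1) 1) := fun x hx =>
    ⟨by linarith [hx.2], by linarith [hx.1]⟩
  refine ⟨(hU.1.comp contDiff_neg.contDiffOn hneg).neg, fun x hx => ?_⟩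
  have h := hU.2 (-x) (hneg hx)
  rw [StarEq] at h ⊢
  rw [← Pi.neg_def, deriv.neg, deriv_comp_neg, neg_neg]
  linear_combination h

theorem neg_one_le_of_isSolOn (hU : IsSolOn c₁ c₂ c₃ U (Ioo (-1) 1)) : -1 ≤ c₁ := by
  by_contra! hc
  set e := -(1 + c₁)
  have he : 0 < e := by linarith
  set m := min (1 / 2) e
  have hm : 0 < m := lt_min one_half_pos he
  -- `V = U + 2x` satisfies `(1 - x²)V' = -V²/2 + g x`, and `g (-1) = -2e`.
  set g : ℝ → ℝ := fun x => 2 + c₁ * (1 - x) + c₂ * (1 + x) + c₃ * (1 - x ^ 2)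
  have hh : ∀ᶠ x in 𝓝[>] (-1), x < 1 ∧ g x < -e := by
    refine nhdsWithin_le_nhds ((eventually_lt_nhds (by norm_num : (-1 : ℝ) < 1)).and ?_)
    have : Continuous g := by fun_prop
    exact this.continuousAt.eventually_lt continuousAt_const (by simp [g]; linarith)
  obtain ⟨b, hb, hbh⟩ := (mem_nhdsGT_iff_exists_Ioo_subset' (by norm_num : (-1 : ℝ) < 1)).1 hh
  have hsol : ∀ x ∈ Ioo (-1) b, x ∈ Ioo (-1) 1 ∧ g x < -e := fun x hx =>
    ⟨⟨hx.1, (hbh hx).1⟩, (hbh hx).2⟩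
  refine not_bddBelow_of_div_sub_le_deriv hb (half_pos hm)
    (f := fun x => -arctan (U x + 2 * x))
    (f' := fun x => -(1 / (1 + (U x + 2 * x) ^ 2) * (deriv U x + 2)))
    (fun x hx => ?_) (fun x hx => ?_) ⟨-(π / 2), ?_⟩
  · have hV : HasDerivAt (fun z => U z + 2 * z) (deriv U x + 2 * 1) x :=
      (hU.hasDerivAt isOpen_Ioo (hsol x hx).1).add ((hasDerivAt_id' x).const_mul 2)
    exact hV.arctan.neg.congr_deriv (by ring)
  · obtain ⟨⟨hx1, hx2⟩, hhx⟩ := hsol x hx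
    have hstar := hU.2 x ⟨hx1, hx2⟩
    rw [StarEq] at hstar
    set V := U x + 2 * x
    have hV : (1 - x ^ 2) * (deriv U x + 2) ≤ -(m * (1 + V ^ 2)) := by
      have : m * (1 + V ^ 2) ≤ e + V ^ 2 / 2 := by
        nlinarith [min_le_left (1 / 2) e, min_le_right (1 / 2) e, sq_nonneg V]
      simp only [g] at hhx
      nlinarith
    have hx2 : 0 < 1 - x ^ 2 := by nlinarith
    calc m / 2 / (x - -1) ≤ m / (1 - x ^ 2) := by
          rw [div_div, div_le_div_iff_of_pos_left hm (by linarith) hx2]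
          nlinarith
      _ ≤ -(deriv U x + 2) / (1 + V ^ 2) := by
          rw [div_le_div_iff₀ hx2 (by positivity)]
          linarith
      _ = _ := by ring
  · rintro _ ⟨x, -, rfl⟩
    simp only [neg_le_neg_iff]
    exact (arctan_lt_pi_div_two _).le

end Solutions

-- `U₀`: solves (★) for `c = (s² - 1, t² - 1, -(s + t)(s + t + 2)/2)`.
def borderSol (s t x : ℝ) : ℝ := (s - t) - (s + t + 2) * x

-- `P`: the integrating factor, `P'/P = (2x + U₀)/(1 - x²)`.
def weight (s t x : ℝ) : ℝ := (1 - x) ^ t * (1 + x) ^ s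

def weightedDiff (s t : ℝ) (U : ℝ → ℝ) (x : ℝ) : ℝ := weight s t x * (U x - borderSol s t x)

section Weighted

variable {s t c₃ : ℝ} {U : ℝ → ℝ}

theorem weight_pos {x : ℝ} (hx : x ∈ Ioo (-1) 1) : 0 < weight s t x :=
  mul_pos (rpow_pos_of_pos (by linarith [hx.2]) t) (rpow_pos_of_pos (by linarith [hx.1]) s)

theorem weight_hasDerivAt {x : ℝ} (hx : x ∈ Ioo (-1) 1) :
    HasDerivAt (weight s t) (weight s t x * ((s - t) - (s + t) * x) / (1 - x ^ 2)) x := by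
  have h1 : 0 < 1 - x := by linarith [hx.2]
  have h2 : 0 < 1 + x := by linarith [hx.1]
  have hA := ((hasDerivAt_id' x).const_sub 1).rpow_const (p := t) (Or.inl h1.ne')
  have hB := ((hasDerivAt_id' x).const_add 1).rpow_const (p := s) (Or.inl h2.ne')
  refine (hA.mul hB).congr_deriv ?_
  have hx2 : 1 - x ^ 2 ≠ 0 := by nlinarith
  rw [rpow_sub_one h1.ne', rpow_sub_one h2.ne', weight]
  field_simp
  ring

theorem weightedDiff_hasDerivAt
    (hU : IsSolOn (s ^ 2 - 1) (t ^ 2 - 1) c₃ U (Ioo (-1) 1)) {x : ℝ} (hx : x ∈ Ioo (-1) 1) :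
    HasDerivAt (weightedDiff s t U)
      (-weightedDiff s t U x ^ 2 / (2 * weight s t x * (1 - x ^ 2))
        - (-(s + t) * (s + t + 2) / 2 - c₃) * weight s t x) x := by
  have hx2 : 0 < 1 - x ^ 2 := by nlinarith [hx.1, hx.2]
  have hW := weight_pos (s := s) (t := t) hx
  have hD : HasDerivAt (fun z => U z - borderSol s t z) (deriv U x - -((s + t + 2) * 1)) x :=
    (hU.hasDerivAt isOpen_Ioo hx).sub
      (((hasDerivAt_id' x).const_mul (s + t + 2)).const_sub (s - t))
  refine (weight_hasDerivAt hx).mul hD |>.congr_deriv ?_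
  have hstar := hU.2 x hx
  rw [StarEq] at hstar
  simp only [weightedDiff, borderSol]
  field_simp
  linear_combination 2 * hstar

theorem weightedDiff_strictAntiOn (hU : IsSolOn (s ^ 2 - 1) (t ^ 2 - 1) c₃ U (Ioo (-1) 1))
    (hc₃ : c₃ < -(s + t) * (s + t + 2) / 2) :
    StrictAntiOn (weightedDiff s t U) (Ioo (-1) 1) := by
  have hd := fun x (hx : x ∈ Ioo (-1) 1) => weightedDiff_hasDerivAt hU hx
  refine strictAntiOn_of_deriv_neg (convex_Ioo _ _)
    (fun x hx => (hd x hx).continuousAt.continuousWithinAt) fun x hx => ?_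
  rw [interior_Ioo] at hx
  rw [(hd x hx).deriv]
  have hx2 : 0 < 1 - x ^ 2 := by nlinarith [hx.1, hx.2]
  have hW := weight_pos (s := s) (t := t) hx
  have : 0 ≤ weightedDiff s t U x ^ 2 / (2 * weight s t x * (1 - x ^ 2)) := by positivity
  rw [neg_div]
  nlinarith [mul_pos (sub_pos.2 hc₃) hW]

theorem weight_le_two_rpow (hs : 0 ≤ s) (ht : 0 ≤ t) {x : ℝ} (hx : x ∈ Ioc (-1) 0) :
    weight s t x ≤ 2 ^ t := by
  have h1 : (1 - x) ^ t ≤ 2 ^ t := rpow_le_rpow (by linarith [hx.2]) (by linarith [hx.1]) ht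
  have h2 : (1 + x) ^ s ≤ 1 := rpow_le_one (by linarith [hx.1]) (by linarith [hx.2]) hs
  calc weight s t x ≤ 2 ^ t * 1 :=
        mul_le_mul h1 h2 (rpow_nonneg (by linarith [hx.1]) s) (rpow_nonneg zero_le_two t)
    _ = 2 ^ t := mul_one _

theorem weightedDiff_nonpos (hs : 0 ≤ s) (ht : 0 ≤ t)
    (hU : IsSolOn (s ^ 2 - 1) (t ^ 2 - 1) c₃ U (Ioo (-1) 1))
    (hc₃ : c₃ < -(s + t) * (s + t + 2) / 2) : ∀ x ∈ Ioo (-1) 1, weightedDiff s t U x ≤ 0 := by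
  intro x₀ hx₀
  by_contra! hpos
  set z := weightedDiff s t U
  set b := min x₀ 0
  have hb : -1 < b := lt_min hx₀.1 (by norm_num)
  have hsub : ∀ x ∈ Ioo (-1) b, x ∈ Ioo (-1) 1 ∧ x ∈ Ioc (-1) 0 ∧ 0 < z x := fun x hx =>
    have hxb : x < b := hx.2
    ⟨⟨hx.1, by linarith [min_le_right x₀ 0, hx₀.2]⟩, ⟨hx.1, (hxb.trans_le (min_le_right _ _)).le⟩,
      hpos.trans ((weightedDiff_strictAntiOn hU hc₃) ⟨hx.1, by linarith [min_le_right x₀ 0]⟩ hx₀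
        (hxb.trans_le (min_le_left _ _)))⟩
  set ε := -(s + t) * (s + t + 2) / 2 - c₃
  refine not_bddBelow_of_div_sub_le_deriv hb (K := (4 * 2 ^ t)⁻¹) (by positivity)
    (f := fun x => (z x)⁻¹)
    (f' := fun x => -(-z x ^ 2 / (2 * weight s t x * (1 - x ^ 2)) - ε * weight s t x) / z x ^ 2)
    (fun x hx => (weightedDiff_hasDerivAt hU (hsub x hx).1).inv (hsub x hx).2.2.ne')
    (fun x hx => ?_) ⟨0, ?_⟩
  · obtain ⟨hx, hx', hzx⟩ := hsub x hx
    have hx2 : 0 < 1 - x ^ 2 := by nlinarith [hx.1, hx.2]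
    have hW := weight_pos (s := s) (t := t) hx
    have hWle := weight_le_two_rpow hs ht hx'
    have hε : 0 < ε := sub_pos.2 hc₃
    calc (4 * 2 ^ t)⁻¹ / (x - -1) = 1 / (4 * 2 ^ t * (1 + x)) := by
          rw [sub_neg_eq_add, add_comm]
          field_simp
      _ ≤ 1 / (2 * weight s t x * (1 - x ^ 2)) := by
          refine one_div_le_one_div_of_le (by positivity) ?_
          have : weight s t x * (1 - x) ≤ 2 ^ t * 2 :=
            mul_le_mul hWle (by linarith [hx.1]) (by linarith [hx.2]) (by positivity)
          nlinarith [mul_le_mul_of_nonneg_right this (by linarith [hx.1] : (0 : ℝ) ≤ 1 + x)]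
      _ ≤ 1 / (2 * weight s t x * (1 - x ^ 2)) + ε * weight s t x / z x ^ 2 :=
          le_add_of_nonneg_right (by positivity)
      _ = _ := by field_simp; ring
  · rintro _ ⟨x, hx, rfl⟩
    exact (inv_pos.2 (hsub x hx).2.2).le

theorem weightedDiff_reflect (x : ℝ) :
    weightedDiff t s (fun x => -U (-x)) x = -weightedDiff s t U (-x) := by
  simp only [weightedDiff, weight, borderSol, sub_neg_eq_add, ← sub_eq_add_neg]
  ring

end Weighted

theorem cbar_le_of_isSolOn {c₁ c₂ c₃ : ℝ} {U : ℝ → ℝ} (hc₁ : -1 ≤ c₁) (hc₂ : -1 ≤ c₂)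
    (hU : IsSolOn c₁ c₂ c₃ U (Ioo (-1) 1)) : cbar c₁ c₂ ≤ c₃ := by
  obtain ⟨s, hs, rfl⟩ : ∃ s, 0 ≤ s ∧ c₁ = s ^ 2 - 1 :=
    ⟨√(1 + c₁), sqrt_nonneg _, by rw [sq_sqrt (by linarith)]; ring⟩
  obtain ⟨t, ht, rfl⟩ : ∃ t, 0 ≤ t ∧ c₂ = t ^ 2 - 1 :=
    ⟨√(1 + c₂), sqrt_nonneg _, by rw [sq_sqrt (by linarith)]; ring⟩
  have hcbar : cbar (s ^ 2 - 1) (t ^ 2 - 1) = -(s + t) * (s + t + 2) / 2 := by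
    simp only [cbar, add_sub_cancel, sqrt_sq hs, sqrt_sq ht]
    ring
  rw [hcbar]
  by_contra! hc₃
  have hz := weightedDiff_nonpos hs ht hU hc₃
  have hz' := weightedDiff_nonpos ht hs hU.reflect (by linarith)
  have h0 : (0 : ℝ) ∈ Ioo (-1) 1 := by norm_num
  have h1 : (1 / 2 : ℝ) ∈ Ioo (-1) 1 := by norm_num
  have hz'0 := hz' 0 h0
  have hz'1 := hz' (-(1 / 2)) (by norm_num)
  rw [weightedDiff_reflect, neg_zero] at hz'0
  rw [weightedDiff_reflect, neg_neg] at hz'1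
  linarith [hz 0 h0, hz (1 / 2) h1, weightedDiff_strictAntiOn hU hc₃ h0 h1 (by norm_num)]

/-- if (★) has a C¹ solution on (-1,1) then `c ∈ J`. -/
theorem statement2 (c₁ c₂ c₃ : ℝ) (U : ℝ → ℝ)
    (hU : IsSolOn c₁ c₂ c₃ U (Ioo (-1 : ℝ) 1)) :
    -1 ≤ c₁ ∧ -1 ≤ c₂ ∧ cbar c₁ c₂ ≤ c₃ := by
  have hc₁ : -1 ≤ c₁ := neg_one_le_of_isSolOn hU
  have hc₂ : -1 ≤ c₂ := neg_one_le_of_isSolOn hU.reflect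
  exact ⟨hc₁, hc₂, cbar_le_of_isSolOn hc₁ hc₂ hU⟩
end
end

section
/- Let 0 < δ ≤ 2, let c₁, c₂, c₃ ∈ ℝ, and let U ∈ C¹((-1,-1+δ)) satisfy (★) on (-1,-1+δ). Then c₁ ≥ -1, the limit lim_{x→-1⁺} U(x) exists and is finite, and this limit equals either τ₁(c₁) or τ₂(c₁). -/
open Set Filter Real Topology

noncomputable section

/-
Write (★) as `(1 - x²) U' = Φ(x, U)`, so that `Φ(-1, u) = 2c₁ + 2u - u²/2`. Since `1/(1 - x²)` is
not integrable at `-1`, a solution along which `Φ(x, U)` stays away from `0` drifts to `±∞`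
like `log (1 + x)`. For large `|u|` one has `Φ(x, u) ≤ -u²/4`: a high level can only be crossed
downwards, and above it `-1/U` would be driven to `+∞` although it is negative; a low level
is a barrier for the same reason. So `U` is bounded near `-1`. If `Φ(-1, L) ≠ 0`, then `U'` has a
fixed sign wherever `U = L` near `-1`, so `U` ends up on one side of `L`; as only the two roots
of `Φ(-1, ·)` are exceptional, `liminf U = limsup U`. At the limit `Φ(-1, ·)` must vanish, or
`U` would drift away, and `Φ(-1, L) = 0` means `(L - 2)² = 4 (1 + c₁)`.
-/

lemma le_of_hasDerivAt_neg_at_level {f f' : ℝ → ℝ} {a b L : ℝ}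
    (hf : ∀ x ∈ Ioc a b, HasDerivAt f (f' x) x) (hL : ∀ x ∈ Ioc a b, f x = L → f' x < 0)
    (hb : L ≤ f b) {x : ℝ} (hx : x ∈ Ioc a b) : L ≤ f x := by
  have hmem : ∀ t ∈ Icc (-b) (-x), -t ∈ Ioc a b := fun t ht =>
    ⟨by linarith [hx.1, ht.2], by linarith [ht.1]⟩
  have hg : ∀ t ∈ Icc (-b) (-x), HasDerivAt (fun t => -f (-t)) (f' (-t)) t := fun t ht =>
    (((hf (-t) (hmem t ht)).comp t (hasDerivAt_neg t)).neg).congr_deriv (by ring)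
  have key := image_le_of_deriv_right_lt_deriv_boundary' (f := fun t => -f (-t)) (a := -b)
    (b := -x) (B := fun _ => -L) (B' := fun _ => 0)
    (fun t ht => (hg t ht).continuousAt.continuousWithinAt)
    (fun t ht => (hg t (Ico_subset_Icc_self ht)).hasDerivWithinAt)
    (by simpa using hb) continuousOn_const (fun _ _ => hasDerivWithinAt_const _ _ _)
    (fun t ht hft => hL (-t) (hmem t (Ico_subset_Icc_self ht)) (by linarith))
    (right_mem_Icc.2 (by linarith [hx.2]))
  simpa using key

lemma Filter.Frequently.eventually_ge_of_deriv_neg {f f' : ℝ → ℝ} {a L : ℝ}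
    (hfreq : ∃ᶠ x in 𝓝[>] a, L ≤ f x)
    (hf : ∀ᶠ x in 𝓝[>] a, HasDerivAt f (f' x) x ∧ (f x = L → f' x < 0)) :
    ∀ᶠ x in 𝓝[>] a, L ≤ f x := by
  obtain ⟨b, hab, hsub⟩ := mem_nhdsGT_iff_exists_Ioc_subset.1 hf
  obtain ⟨c, hLc, hc⟩ := (hfreq.and_eventually (Ioc_mem_nhdsGT hab)).exists
  have hsub' : Ioc a c ⊆ Ioc a b := Ioc_subset_Ioc_right hc.2
  filter_upwards [Ioc_mem_nhdsGT hc.1] with x hx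
  exact le_of_hasDerivAt_neg_at_level (fun y hy => (hsub (hsub' hy)).1)
    (fun y hy => (hsub (hsub' hy)).2) hLc hx

lemma Filter.Frequently.eventually_le_of_deriv_pos {f f' : ℝ → ℝ} {a L : ℝ}
    (hfreq : ∃ᶠ x in 𝓝[>] a, f x ≤ L)
    (hf : ∀ᶠ x in 𝓝[>] a, HasDerivAt f (f' x) x ∧ (f x = L → 0 < f' x)) :
    ∀ᶠ x in 𝓝[>] a, f x ≤ L := by
  have := Filter.Frequently.eventually_ge_of_deriv_neg (f := fun x => -f x) (f' := fun x => -f' x)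
    (L := -L) (hfreq.mono fun x hx => neg_le_neg hx)
    (hf.mono fun x hx => ⟨hx.1.neg, fun h => neg_neg_iff_pos.2 (hx.2 (neg_inj.1 h))⟩)
  exact this.mono fun x hx => neg_le_neg_iff.1 hx

lemma tendsto_atTop_of_hasDerivAt_le_neg_div {f f' : ℝ → ℝ} {a η : ℝ} (hη : 0 < η)
    (hf : ∀ᶠ x in 𝓝[>] a, HasDerivAt f (f' x) x ∧ f' x ≤ -η / (x - a)) :
    Tendsto f (𝓝[>] a) atTop := by
  obtain ⟨b, hab, hsub⟩ := mem_nhdsGT_iff_exists_Ioc_subset.1 hf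
  set V : ℝ → ℝ := fun x => f x + η * log (x - a)
  have hV : ∀ x ∈ Ioc a b, HasDerivAt V (f' x + η * (x - a)⁻¹) x := fun x hx =>
    (hsub hx).1.add ((((hasDerivAt_id x).sub_const a).log (sub_pos.2 hx.1).ne').const_mul η
      |>.congr_deriv (by simp [div_eq_mul_inv]))
  have hanti : AntitoneOn V (Ioc a b) := by
    refine antitoneOn_of_hasDerivWithinAt_nonpos (f' := fun x => f' x + η * (x - a)⁻¹)
      (convex_Ioc a b) (fun x hx => (hV x hx).continuousAt.continuousWithinAt)
      (fun x hx => ?_) (fun x hx => ?_)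
    all_goals rw [interior_Ioc] at hx
    · exact (hV x (Ioo_subset_Ioc_self hx)).hasDerivWithinAt
    · have := (hsub (Ioo_subset_Ioc_self hx)).2
      rw [neg_div, div_eq_mul_inv] at this
      linarith
  have hlog : Tendsto (fun x => log (x - a)) (𝓝[>] a) atBot := by
    refine tendsto_log_nhdsGT_zero.comp (tendsto_nhdsWithin_iff.2 ⟨?_, ?_⟩)
    · exact tendsto_nhdsWithin_of_tendsto_nhds (by simpa using (continuous_sub_right a).tendsto a)
    · filter_upwards [self_mem_nhdsWithin] with x (hx : a < x) using sub_pos.2 hx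
  have hlower : Tendsto (fun x => V b + -(η * log (x - a))) (𝓝[>] a) atTop :=
    tendsto_atTop_add_const_left _ _ (tendsto_neg_atBot_atTop.comp (hlog.const_mul_atBot hη))
  refine tendsto_atTop_mono' _ ?_ hlower
  filter_upwards [Ioc_mem_nhdsGT hab] with x hx
  have := hanti hx (right_mem_Ioc.2 hab) hx.2
  simp only [V] at this ⊢
  linarith

lemma exists_tendsto_of_eventually_ge_or_le {α : Type*} {l : Filter α} [l.NeBot] {f : α → ℝ}
    {S : Set ℝ} (hS : S.Finite) (hle : IsBoundedUnder (· ≤ ·) l f)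
    (hge : IsBoundedUnder (· ≥ ·) l f)
    (h : ∀ L ∉ S, (∀ᶠ x in l, L ≤ f x) ∨ ∀ᶠ x in l, f x ≤ L) : ∃ L, Tendsto f l (𝓝 L) := by
  refine ⟨liminf f l, tendsto_of_liminf_eq_limsup rfl ?_ hle hge⟩
  refine le_antisymm ?_ (liminf_le_limsup hle hge)
  by_contra! hlt
  obtain ⟨L, ⟨hL₁, hL₂⟩, hLS⟩ := ((Ioo_infinite hlt).sdiff hS).nonempty
  rcases h L hLS with hL | hL
  · exact (le_liminf_of_le hle.isCoboundedUnder_ge hL).not_gt hL₁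
  · exact (limsup_le_of_le hge.isCoboundedUnder_le hL).not_gt hL₂

lemma one_sub_sq_pos_of_mem_Ioo {x : ℝ} (hx : x ∈ Ioo (-1 : ℝ) 1) : 0 < 1 - x ^ 2 := by
  nlinarith [hx.1, hx.2]

lemma div_one_sub_sq_le_neg_div {x p A : ℝ} (hx : x ∈ Ioo (-1 : ℝ) 1) (hA : 0 ≤ A)
    (hp : p ≤ -A) : p / (1 - x ^ 2) ≤ -(A / 2) / (x - -1) := by
  have hx₁ : 0 < x - -1 := by linarith [hx.1]
  rw [div_le_div_iff₀ (one_sub_sq_pos_of_mem_Ioo hx) hx₁]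
  nlinarith [hx.2, mul_nonneg hA hx₁.le, mul_nonneg hA (sub_nonneg.2 hx.2.le)]

-- (★) reads `(1 - x²) U' = starRhs c₁ c₂ c₃ x U`.
def starRhs (c₁ c₂ c₃ x u : ℝ) : ℝ :=
  c₁ * (1 - x) + c₂ * (1 + x) + c₃ * (1 - x ^ 2) - 2 * x * u - u ^ 2 / 2

def starBound (c₁ c₂ c₃ : ℝ) : ℝ := 2 * |c₁| + 2 * |c₂| + |c₃| + 8

section starRhs

variable {c₁ c₂ c₃ : ℝ}

lemma starBound_pos : 0 < starBound c₁ c₂ c₃ := by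
  unfold starBound
  positivity

lemma continuous_starRhs : Continuous (Function.uncurry (starRhs c₁ c₂ c₃)) := by
  unfold Function.uncurry starRhs
  fun_prop

lemma starRhs_le_neg_sq_div_four {x u : ℝ} (hx : x ∈ Icc (-1 : ℝ) 1)
    (hu : starBound c₁ c₂ c₃ ≤ |u|) : starRhs c₁ c₂ c₃ x u ≤ -u ^ 2 / 4 := by
  have hmul : ∀ c t k : ℝ, |t| ≤ k → c * t ≤ |c| * k := fun c t k ht =>
    (le_abs_self _).trans (by rw [abs_mul]; exact mul_le_mul_of_nonneg_left ht (abs_nonneg c))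
  obtain ⟨hx₁, hx₂⟩ := hx
  have h₁ := hmul c₁ (1 - x) 2 (abs_le.2 ⟨by linarith, by linarith⟩)
  have h₂ := hmul c₂ (1 + x) 2 (abs_le.2 ⟨by linarith, by linarith⟩)
  have h₃ := hmul c₃ (1 - x ^ 2) 1 (abs_le.2 ⟨by nlinarith, by nlinarith⟩)
  have h₄ := hmul (-2 * u) x 1 (abs_le.2 ⟨hx₁, hx₂⟩)
  rw [abs_mul, abs_neg, abs_two] at h₄
  unfold starBound at hu
  unfold starRhs
  nlinarith [mul_le_mul_of_nonneg_left hu (abs_nonneg u), sq_abs u, abs_nonneg c₁, abs_nonneg c₂,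
    abs_nonneg c₃]

lemma starRhs_neg_one_eq_zero {L : ℝ} (h : starRhs c₁ c₂ c₃ (-1) L = 0) :
    -1 ≤ c₁ ∧ (L = tau1 c₁ ∨ L = tau2 c₁) := by
  have hsq : (L - 2) ^ 2 = 4 * (1 + c₁) := by
    simp only [starRhs] at h
    linarith
  have hc₁ : -1 ≤ c₁ := by nlinarith [sq_nonneg (L - 2)]
  refine ⟨hc₁, ?_⟩
  have hsqrt : (L - 2) ^ 2 = (2 * √(1 + c₁)) ^ 2 := by
    rw [mul_pow, sq_sqrt (by linarith)]
    linarith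
  rcases sq_eq_sq_iff_eq_or_eq_neg.1 hsqrt with h₂ | h₁
  · right; unfold tau2; linarith
  · left; unfold tau1; linarith

end starRhs

lemma IsSolOn.eventually_hasDerivAt {δ c₁ c₂ c₃ : ℝ} {U : ℝ → ℝ} (hδ : 0 < δ)
    (hU : IsSolOn c₁ c₂ c₃ U (Ioo (-1) (-1 + δ))) :
    ∀ᶠ x in 𝓝[>] (-1 : ℝ), HasDerivAt U (starRhs c₁ c₂ c₃ x (U x) / (1 - x ^ 2)) x := by
  filter_upwards [Ioo_mem_nhdsGT (by linarith : (-1 : ℝ) < -1 + δ),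
    Ioo_mem_nhdsGT (by norm_num : (-1 : ℝ) < 1)] with x hxδ hx
  refine ((hU.1.differentiableOn one_ne_zero).differentiableAt
    (isOpen_Ioo.mem_nhds hxδ)).hasDerivAt.congr_deriv ?_
  have hstar := hU.2 x hxδ
  unfold StarEq at hstar
  rw [eq_div_iff (one_sub_sq_pos_of_mem_Ioo hx).ne']
  unfold starRhs
  linarith

section Solution

variable {c₁ c₂ c₃ : ℝ} {U : ℝ → ℝ}
  (hU : ∀ᶠ x in 𝓝[>] (-1 : ℝ), HasDerivAt U (starRhs c₁ c₂ c₃ x (U x) / (1 - x ^ 2)) x)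
include hU

lemma eventually_lt_starBound : ∀ᶠ x in 𝓝[>] (-1 : ℝ), U x < starBound c₁ c₂ c₃ := by
  set M := starBound c₁ c₂ c₃
  have hI : Ioo (-1 : ℝ) 1 ∈ 𝓝[>] (-1 : ℝ) := Ioo_mem_nhdsGT (by norm_num)
  by_contra hnot
  have hfreq : ∃ᶠ x in 𝓝[>] (-1 : ℝ), M ≤ U x :=
    (not_eventually.1 hnot).mono fun x hx => not_lt.1 hx
  have hge : ∀ᶠ x in 𝓝[>] (-1 : ℝ), M ≤ U x := by
    refine hfreq.eventually_ge_of_deriv_neg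
      (f' := fun x => starRhs c₁ c₂ c₃ x (U x) / (1 - x ^ 2)) ?_
    filter_upwards [hU, hI] with x hd hx
    refine ⟨hd, fun hUx => div_neg_of_neg_of_pos ?_ (one_sub_sq_pos_of_mem_Ioo hx)⟩
    rw [hUx]
    nlinarith [starRhs_le_neg_sq_div_four (c₂ := c₂) (c₃ := c₃) (Ioo_subset_Icc_self hx)
      (le_abs_self M), starBound_pos (c₁ := c₁) (c₂ := c₂) (c₃ := c₃)]
  -- Above `M` we have `U' ≤ -U² / (8 (1 + x))`, so `-1/U` is pushed up to `+∞`.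
  have hblow : Tendsto (fun x => -(U x)⁻¹) (𝓝[>] (-1 : ℝ)) atTop := by
    refine tendsto_atTop_of_hasDerivAt_le_neg_div
      (f' := fun x => -(-(starRhs c₁ c₂ c₃ x (U x) / (1 - x ^ 2)) / U x ^ 2)) (η := 1 / 8)
      (by norm_num) ?_
    filter_upwards [hU, hI, hge] with x hd hx hMU
    have hUpos : 0 < U x := starBound_pos.trans_le hMU
    refine ⟨(hd.inv hUpos.ne').neg, ?_⟩
    have hquad := starRhs_le_neg_sq_div_four (Ioo_subset_Icc_self hx) (hMU.trans (le_abs_self _))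
    have hΦ := div_one_sub_sq_le_neg_div (p := starRhs c₁ c₂ c₃ x (U x)) (A := U x ^ 2 / 4) hx
      (by positivity) (by linarith)
    rw [neg_div, neg_neg, div_le_iff₀ (by positivity)]
    refine hΦ.trans_eq ?_
    field_simp
    ring
  obtain ⟨x, hx₁, hx₂⟩ := ((hblow.eventually_ge_atTop 0).and hge).exists
  linarith [inv_pos.2 (starBound_pos.trans_le hx₂)]

lemma isBoundedUnder_ge_of_hasDerivAt_starRhs : IsBoundedUnder (· ≥ ·) (𝓝[>] (-1 : ℝ)) U := by
  obtain ⟨b, hb, hsub⟩ := mem_nhdsGT_iff_exists_Ioc_subset.1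
    (hU.and (Ioo_mem_nhdsGT (by norm_num : (-1 : ℝ) < 1)))
  set m := min (-starBound c₁ c₂ c₃) (U b)
  have hm : starBound c₁ c₂ c₃ ≤ |m| := by
    rw [abs_of_neg (lt_of_le_of_lt (min_le_left _ _) (neg_neg_of_pos starBound_pos))]
    linarith [min_le_left (-starBound c₁ c₂ c₃) (U b)]
  refine isBoundedUnder_of_eventually_ge (a := m)
    (mem_of_superset (Ioc_mem_nhdsGT hb) fun x hx => ?_)
  refine le_of_hasDerivAt_neg_at_level (fun y hy => (hsub hy).1) (fun y hy hUy => ?_)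
    (min_le_right _ _) hx
  have hy := (hsub hy).2
  refine div_neg_of_neg_of_pos ?_ (one_sub_sq_pos_of_mem_Ioo hy)
  rw [hUy]
  nlinarith [starRhs_le_neg_sq_div_four (Ioo_subset_Icc_self hy) hm,
    starBound_pos (c₁ := c₁) (c₂ := c₂) (c₃ := c₃), abs_nonneg m, sq_abs m]

lemma tendsto_atTop_of_starRhs_le {η : ℝ} (hη : 0 < η)
    (h : ∀ᶠ x in 𝓝[>] (-1 : ℝ), starRhs c₁ c₂ c₃ x (U x) ≤ -η) :
    Tendsto U (𝓝[>] (-1 : ℝ)) atTop := by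
  refine tendsto_atTop_of_hasDerivAt_le_neg_div
    (f' := fun x => starRhs c₁ c₂ c₃ x (U x) / (1 - x ^ 2)) (half_pos hη) ?_
  filter_upwards [hU, h, Ioo_mem_nhdsGT (by norm_num : (-1 : ℝ) < 1)] with x hd hΦ hx
  exact ⟨hd, div_one_sub_sq_le_neg_div hx hη.le hΦ⟩

lemma tendsto_atBot_of_le_starRhs {η : ℝ} (hη : 0 < η)
    (h : ∀ᶠ x in 𝓝[>] (-1 : ℝ), η ≤ starRhs c₁ c₂ c₃ x (U x)) :
    Tendsto U (𝓝[>] (-1 : ℝ)) atBot := by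
  refine tendsto_neg_atTop_iff.1 (tendsto_atTop_of_hasDerivAt_le_neg_div
    (f' := fun x => -(starRhs c₁ c₂ c₃ x (U x) / (1 - x ^ 2))) (half_pos hη) ?_)
  filter_upwards [hU, h, Ioo_mem_nhdsGT (by norm_num : (-1 : ℝ) < 1)] with x hd hΦ hx
  refine ⟨hd.neg, ?_⟩
  rw [← neg_div]
  exact div_one_sub_sq_le_neg_div hx hη.le (by linarith)

lemma eventually_ge_or_le_of_starRhs_ne_zero {L : ℝ} (hL : starRhs c₁ c₂ c₃ (-1) L ≠ 0) :
    (∀ᶠ x in 𝓝[>] (-1 : ℝ), L ≤ U x) ∨ ∀ᶠ x in 𝓝[>] (-1 : ℝ), U x ≤ L := by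
  have hcont : Tendsto (fun x => starRhs c₁ c₂ c₃ x L) (𝓝[>] (-1 : ℝ))
      (𝓝 (starRhs c₁ c₂ c₃ (-1) L)) :=
    (continuous_starRhs.comp (continuous_id.prodMk continuous_const)).continuousWithinAt
  have hI : Ioo (-1 : ℝ) 1 ∈ 𝓝[>] (-1 : ℝ) := Ioo_mem_nhdsGT (by norm_num)
  rcases hL.lt_or_gt with hneg | hpos
  · by_cases hfreq : ∃ᶠ x in 𝓝[>] (-1 : ℝ), L ≤ U x
    · refine Or.inl (hfreq.eventually_ge_of_deriv_neg
        (f' := fun x => starRhs c₁ c₂ c₃ x (U x) / (1 - x ^ 2)) ?_)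
      filter_upwards [hU, hI, hcont.eventually (gt_mem_nhds hneg)] with x hd hx hΦ
      exact ⟨hd, fun hUx => hUx ▸ div_neg_of_neg_of_pos hΦ (one_sub_sq_pos_of_mem_Ioo hx)⟩
    · exact Or.inr ((not_frequently.1 hfreq).mono fun x hx => (not_le.1 hx).le)
  · by_cases hfreq : ∃ᶠ x in 𝓝[>] (-1 : ℝ), U x ≤ L
    · refine Or.inr (hfreq.eventually_le_of_deriv_pos
        (f' := fun x => starRhs c₁ c₂ c₃ x (U x) / (1 - x ^ 2)) ?_)
      filter_upwards [hU, hI, hcont.eventually (lt_mem_nhds hpos)] with x hd hx hΦ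
      exact ⟨hd, fun hUx => hUx ▸ div_pos hΦ (one_sub_sq_pos_of_mem_Ioo hx)⟩
    · exact Or.inl ((not_frequently.1 hfreq).mono fun x hx => (not_le.1 hx).le)

lemma starRhs_eq_zero_of_tendsto {L : ℝ} (hL : Tendsto U (𝓝[>] (-1 : ℝ)) (𝓝 L)) :
    starRhs c₁ c₂ c₃ (-1) L = 0 := by
  have hΦ : Tendsto (fun x => starRhs c₁ c₂ c₃ x (U x)) (𝓝[>] (-1 : ℝ))
      (𝓝 (starRhs c₁ c₂ c₃ (-1) L)) :=
    (continuous_starRhs.tendsto ((-1 : ℝ), L)).comp (f := fun x => (x, U x))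
      ((tendsto_nhdsWithin_of_tendsto_nhds tendsto_id).prodMk_nhds hL)
  by_contra hne
  rcases lt_or_gt_of_ne hne with hneg | hpos
  · refine not_tendsto_atTop_of_tendsto_nhds hL (tendsto_atTop_of_starRhs_le hU
      (η := -starRhs c₁ c₂ c₃ (-1) L / 2) (by linarith) ?_)
    exact hΦ.eventually (ge_mem_nhds (by linarith))
  · refine not_tendsto_atBot_of_tendsto_nhds hL (tendsto_atBot_of_le_starRhs hU
      (half_pos hpos) ?_)
    exact hΦ.eventually (le_mem_nhds (by linarith))

end Solution

theorem statement8_general (δ c₁ c₂ c₃ : ℝ) (hδ : 0 < δ) (U : ℝ → ℝ)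
    (hU : IsSolOn c₁ c₂ c₃ U (Ioo (-1 : ℝ) (-1 + δ))) :
    -1 ≤ c₁ ∧ ∃ L : ℝ, Tendsto U (𝓝[>] (-1 : ℝ)) (𝓝 L) ∧
      (L = tau1 c₁ ∨ L = tau2 c₁) := by
  have hU' := hU.eventually_hasDerivAt hδ
  obtain ⟨L, hL⟩ := exists_tendsto_of_eventually_ge_or_le (S := {tau1 c₁, tau2 c₁})
    (toFinite _) (isBoundedUnder_of_eventually_le ((eventually_lt_starBound hU').mono
      fun _ hx => hx.le)) (isBoundedUnder_ge_of_hasDerivAt_starRhs hU')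
    fun L hLS => eventually_ge_or_le_of_starRhs_ne_zero hU' fun h0 =>
      hLS (starRhs_neg_one_eq_zero h0).2
  obtain ⟨hc₁, hτ⟩ := starRhs_neg_one_eq_zero (starRhs_eq_zero_of_tendsto hU' hL)
  exact ⟨hc₁, L, hL, hτ⟩

/-- behavior at the left endpoint `-1`. -/
theorem statement8 (δ c₁ c₂ c₃ : ℝ) (hδ : 0 < δ) (hδ2 : δ ≤ 2) (U : ℝ → ℝ)
    (hU : IsSolOn c₁ c₂ c₃ U (Ioo (-1 : ℝ) (-1 + δ))) :
    -1 ≤ c₁ ∧ ∃ L : ℝ, Tendsto U (𝓝[>] (-1 : ℝ)) (𝓝 L) ∧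
      (L = tau1 c₁ ∨ L = tau2 c₁) :=
  statement8_general δ c₁ c₂ c₃ hδ U hU
end
end

section
/- Let 0 < δ < 2 and let U, Ũ be functions that are C¹ on (-1,-1+δ] and continuous on [-1,-1+δ], satisfying (1-x²)U'(x) + 2x·U(x) + (1/2)U(x)² ≥ (1-x²)Ũ'(x) + 2x·Ũ(x) + (1/2)Ũ(x)² for all x ∈ (-1,-1+δ). Assume that either (i) U(-1) ≥ Ũ(-1) > 2, or (ii) U(-1) = Ũ(-1) = 2 and limsup_{x→-1⁺} ∫_{-1+δ}^{x} (U(s) - 2)/(1-s²) ds < +∞. Then either U(x) > Ũ(x) for all x ∈ (-1,-1+δ), or there exists δ' ∈ (0,δ) such that U ≡ Ũ on (-1,-1+δ'). -/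
open Set Filter Real Topology

noncomputable section

/-!
Write `w = U - Ũ`. Since `u ↦ u²/2` is convex, `U²/2 - Ũ²/2 ≤ U w`, so the hypothesis yields the
linear inequality `(1 - x²) w' + (U + 2x) w ≥ 0`; with `F' = (U + 2x)/(1 - x²)` the function
`e^F w` is therefore nondecreasing on `(-1, -1 + δ)`. It tends to `0` at `-1`: in case (i),
`U(-1) > 2` gives `F' ≥ c/(1 + x)`, so `F → -∞` while `w` stays bounded; in case (ii), `w → 0`
while `F`, which up to `-2 log (1 - x)` is the integral in the hypothesis, stays bounded above.
Hence `e^F w ≥ 0` on `(-1, -1 + δ)`, and a zero of `w` forces `w ≡ 0` to its left.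
-/

theorem monotoneOn_Ioo_of_hasDerivAt_nonneg {a b : ℝ} {f f' : ℝ → ℝ}
    (hf : ∀ x ∈ Ioo a b, HasDerivAt f (f' x) x) (hf' : ∀ x ∈ Ioo a b, 0 ≤ f' x) :
    MonotoneOn f (Ioo a b) :=
  monotoneOn_of_hasDerivWithinAt_nonneg (convex_Ioo a b)
    (fun x hx => (hf x hx).continuousAt.continuousWithinAt)
    (by simpa only [interior_Ioo] using fun x hx => (hf x hx).hasDerivWithinAt)
    (by simpa only [interior_Ioo] using hf')

theorem monotoneOn_exp_mul_of_hasDerivAt {a b : ℝ} {F p w w' : ℝ → ℝ}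
    (hF : ∀ x ∈ Ioo a b, HasDerivAt F (p x) x) (hw : ∀ x ∈ Ioo a b, HasDerivAt w (w' x) x)
    (h : ∀ x ∈ Ioo a b, 0 ≤ p x * w x + w' x) :
    MonotoneOn (fun x => exp (F x) * w x) (Ioo a b) := by
  refine monotoneOn_Ioo_of_hasDerivAt_nonneg (fun x hx => ?_)
    fun x hx => mul_nonneg (exp_pos (F x)).le (h x hx)
  exact ((hF x hx).exp.mul (hw x hx)).congr_deriv (by ring)

theorem MonotoneOn.nonneg_of_tendsto_nhdsGT {a b x : ℝ} {G : ℝ → ℝ}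
    (hG : MonotoneOn G (Ioo a b)) (hlim : Tendsto G (𝓝[>] a) (𝓝 0)) (hx : x ∈ Ioo a b) :
    0 ≤ G x :=
  le_of_tendsto hlim <| by
    filter_upwards [Ioc_mem_nhdsGT hx.1] with y hy
    exact hG ⟨hy.1, hy.2.trans_lt hx.2⟩ hx hy.2

theorem pos_or_exists_eqOn_zero_of_monotoneOn_exp_mul {a b : ℝ} {F w : ℝ → ℝ}
    (hmono : MonotoneOn (fun x => exp (F x) * w x) (Ioo a b))
    (hlim : Tendsto (fun x => exp (F x) * w x) (𝓝[>] a) (𝓝 0)) :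
    (∀ x ∈ Ioo a b, 0 < w x) ∨ ∃ z ∈ Ioo a b, EqOn w 0 (Ioo a z) := by
  have hw : ∀ x ∈ Ioo a b, 0 ≤ w x := fun x hx =>
    nonneg_of_mul_nonneg_right (hmono.nonneg_of_tendsto_nhdsGT hlim hx) (exp_pos _)
  by_cases hzero : ∃ z ∈ Ioo a b, w z = 0
  · obtain ⟨z, hz, hwz⟩ := hzero
    refine Or.inr ⟨z, hz, fun y hy => ?_⟩
    have hy' : y ∈ Ioo a b := ⟨hy.1, hy.2.trans hz.2⟩
    have hGy : exp (F y) * w y ≤ 0 := by simpa [hwz] using hmono hy' hz hy.2.le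
    exact le_antisymm (nonpos_of_mul_nonpos_right hGy (exp_pos _)) (hw y hy')
  · push Not at hzero
    exact Or.inl fun x hx => (hw x hx).lt_of_ne' (hzero x hx)

theorem tendsto_atBot_of_div_sub_le_deriv {a c : ℝ} {g g' : ℝ → ℝ} (hc : 0 < c)
    (h : ∀ᶠ x in 𝓝[>] a, HasDerivAt g (g' x) x ∧ c / (x - a) ≤ g' x) :
    Tendsto g (𝓝[>] a) atBot := by
  obtain ⟨b, hab, hb⟩ := mem_nhdsGT_iff_exists_Ioo_subset.mp h
  have hmono : MonotoneOn (fun x => g x - c * log (x - a)) (Ioo a b) := by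
    refine monotoneOn_Ioo_of_hasDerivAt_nonneg (fun x hx => ?_) fun x hx => sub_nonneg.2 (hb hx).2
    have hlog := (((hasDerivAt_id' x).sub_const a).log (sub_pos.2 hx.1).ne').const_mul c
    exact ((hb hx).1.sub hlog).congr_deriv (by rw [mul_one_div])
  obtain ⟨m, hm⟩ := nonempty_Ioo.2 (mem_Ioi.1 hab)
  have hshift : Tendsto (fun x => x - a) (𝓝[>] a) (𝓝[>] 0) := by
    refine tendsto_nhdsWithin_of_tendsto_nhds_of_eventually_within _ ?_ ?_
    · exact ((continuous_sub_right a).tendsto' a 0 (sub_self a)).mono_left nhdsWithin_le_nhds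
    · filter_upwards [self_mem_nhdsWithin] with x hx
      exact sub_pos.2 (mem_Ioi.1 hx)
  have hlog : Tendsto (fun x => c * log (x - a) + (g m - c * log (m - a))) (𝓝[>] a) atBot :=
    ((tendsto_log_nhdsGT_zero.comp hshift).const_mul_atBot hc).atBot_add tendsto_const_nhds
  refine tendsto_atBot_mono' _ ?_ hlog
  filter_upwards [Ioo_mem_nhdsGT hm.1] with x hx
  have hxm := hmono ⟨hx.1, hx.2.trans hm.2⟩ hm hx.2.le
  linarith

-- An antiderivative of `(U + 2x)/(1 - x²) = (U - 2)/(1 - x²) + 2/(1 - x)` on `(-1, a)`.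
def integratingExponent (a : ℝ) (U : ℝ → ℝ) (x : ℝ) : ℝ :=
  (∫ s in a..x, (U s - 2) / (1 - s ^ 2)) - 2 * log (1 - x)

theorem hasDerivAt_integratingExponent {a x : ℝ} {U : ℝ → ℝ} (ha : a < 1)
    (hU : ContinuousOn U (Ioc (-1) a)) (hx : x ∈ Ioo (-1) a) :
    HasDerivAt (integratingExponent a U) ((U x + 2 * x) / (1 - x ^ 2)) x := by
  have hq : ContinuousOn (fun s => (U s - 2) / (1 - s ^ 2)) (Ioc (-1) a) :=
    (hU.sub continuousOn_const).div (by fun_prop) fun s hs => by nlinarith [hs.1, hs.2]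
  have hQ : HasDerivAt (fun x => ∫ s in a..x, (U s - 2) / (1 - s ^ 2))
      ((U x - 2) / (1 - x ^ 2)) x :=
    intervalIntegral.integral_hasDerivAt_right
      (hq.mono (ordConnected_Ioc.uIcc_subset (right_mem_Ioc.2 (hx.1.trans hx.2))
        (Ioo_subset_Ioc_self hx))).intervalIntegrable
      ((hq.mono Ioo_subset_Ioc_self).stronglyMeasurableAtFilter isOpen_Ioo x hx)
      (hq.continuousAt (mem_of_superset (isOpen_Ioo.mem_nhds hx) Ioo_subset_Ioc_self))
  have h1x : 1 - x ≠ 0 := by linarith [hx.2]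
  have h1x2 : 1 - x ^ 2 ≠ 0 := by nlinarith [hx.1, hx.2]
  refine (hQ.sub ((((hasDerivAt_id' x).const_sub 1).log h1x).const_mul 2)).congr_deriv ?_
  field_simp
  ring

theorem linearized_riccati_nonneg {x u v du dv : ℝ} (hx : 0 < 1 - x ^ 2)
    (h : (1 - x ^ 2) * dv + 2 * x * v + 1 / 2 * v ^ 2 ≤
      (1 - x ^ 2) * du + 2 * x * u + 1 / 2 * u ^ 2) :
    0 ≤ (u + 2 * x) / (1 - x ^ 2) * (u - v) + (du - dv) := by
  have hlin : 0 ≤ (1 - x ^ 2) * (du - dv) + (u + 2 * x) * (u - v) := by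
    nlinarith [sq_nonneg (u - v)]
  calc 0 ≤ ((1 - x ^ 2) * (du - dv) + (u + 2 * x) * (u - v)) / (1 - x ^ 2) :=
        div_nonneg hlin hx.le
    _ = (u + 2 * x) / (1 - x ^ 2) * (u - v) + (du - dv) := by
        field_simp
        ring

theorem tendsto_integratingExponent_atBot {a : ℝ} {U : ℝ → ℝ} (ha : -1 < a) (ha' : a < 1)
    (hU : ContinuousOn U (Icc (-1) a)) (hU2 : 2 < U (-1)) :
    Tendsto (integratingExponent a U) (𝓝[>] (-1)) atBot := by
  obtain ⟨c, hc, hc2⟩ : ∃ c, 0 < c ∧ 2 + 2 * c < U (-1) :=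
    ⟨(U (-1) - 2) / 4, by linarith, by linarith⟩
  have hUt : Tendsto U (𝓝[>] (-1)) (𝓝 (U (-1))) :=
    ((hU (-1) (left_mem_Icc.2 ha.le)).mono_of_mem_nhdsWithin (Icc_mem_nhdsGT ha)).tendsto
  refine tendsto_atBot_of_div_sub_le_deriv (g' := fun x => (U x + 2 * x) / (1 - x ^ 2)) hc ?_
  filter_upwards [hUt.eventually (lt_mem_nhds hc2), Ioo_mem_nhdsGT ha] with x hUx hx
  refine ⟨hasDerivAt_integratingExponent ha' (hU.mono Ioc_subset_Icc_self) hx, ?_⟩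
  have h1 : 0 < x - -1 := by linarith [hx.1]
  rw [div_le_div_iff₀ h1 (by nlinarith [hx.1, hx.2])]
  nlinarith [mul_nonneg h1.le (show 0 ≤ U x + 2 * x - c * (1 - x) by nlinarith [mul_pos hc h1])]

theorem isBoundedUnder_exp_integratingExponent {a : ℝ} {U : ℝ → ℝ}
    (hbdd : IsBoundedUnder (· ≤ ·) (𝓝[>] (-1)) fun x => ∫ s in a..x, (U s - 2) / (1 - s ^ 2)) :
    IsBoundedUnder (· ≤ ·) (𝓝[>] (-1)) (norm ∘ fun x => exp (integratingExponent a U x)) := by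
  have hF : IsBoundedUnder (· ≤ ·) (𝓝[>] (-1)) (integratingExponent a U) := hbdd.mono_le <| by
    filter_upwards [Ioo_mem_nhdsGT (show (-1 : ℝ) < 0 by norm_num)] with x hx
    have : 0 ≤ log (1 - x) := log_nonneg (by linarith [hx.2])
    simp only [integratingExponent]
    linarith
  simpa [Function.comp_def] using exp_monotone.isBoundedUnder_le_comp hF

/-- comparison lemma near the left endpoint `-1`. Here `V` plays the role of `Ũ`. -/
theorem statement13 (δ : ℝ) (hδ1 : 0 < δ) (hδ2 : δ < 2) (U V : ℝ → ℝ)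
    (hU1 : ContDiffOn ℝ 1 U (Ioc (-1 : ℝ) (-1 + δ)))
    (hU0 : ContinuousOn U (Icc (-1 : ℝ) (-1 + δ)))
    (hV1 : ContDiffOn ℝ 1 V (Ioc (-1 : ℝ) (-1 + δ)))
    (hV0 : ContinuousOn V (Icc (-1 : ℝ) (-1 + δ)))
    (hineq : ∀ x ∈ Ioo (-1 : ℝ) (-1 + δ),
      (1 - x ^ 2) * deriv V x + 2 * x * V x + (1 / 2) * (V x) ^ 2 ≤
      (1 - x ^ 2) * deriv U x + 2 * x * U x + (1 / 2) * (U x) ^ 2)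
    (hcond :
      -- (i) U(-1) ≥ Ũ(-1) > 2
      (V (-1) ≤ U (-1) ∧ 2 < V (-1)) ∨
      -- (ii) U(-1) = Ũ(-1) = 2 and limsup_{x→-1⁺} ∫_{-1+δ}^x (U(s)-2)/(1-s²) ds < +∞
      (U (-1) = 2 ∧ V (-1) = 2 ∧
        Filter.IsBoundedUnder (· ≤ ·) (𝓝[>] (-1 : ℝ))
          (fun x : ℝ => ∫ s in (-1 + δ)..x, (U s - 2) / (1 - s ^ 2)))) :
    (∀ x ∈ Ioo (-1 : ℝ) (-1 + δ), V x < U x) ∨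
    (∃ δ' : ℝ, δ' ∈ Ioo (0 : ℝ) δ ∧ EqOn U V (Ioo (-1 : ℝ) (-1 + δ'))) := by
  set a := -1 + δ
  have ha : -1 < a := by linarith
  have ha' : a < 1 := by linarith
  have hderiv {f : ℝ → ℝ} (hf : ContDiffOn ℝ 1 f (Ioc (-1) a)) {x : ℝ} (hx : x ∈ Ioo (-1) a) :
      HasDerivAt f (deriv f x) x :=
    ((hf.contDiffAt (mem_of_superset (isOpen_Ioo.mem_nhds hx) Ioo_subset_Ioc_self)).differentiableAt
      one_ne_zero).hasDerivAt
  have hmono : MonotoneOn (fun x => exp (integratingExponent a U x) * (U x - V x)) (Ioo (-1) a) :=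
    monotoneOn_exp_mul_of_hasDerivAt
      (fun x hx => hasDerivAt_integratingExponent ha' (hU0.mono Ioc_subset_Icc_self) hx)
      (fun x hx => (hderiv hU1 hx).sub (hderiv hV1 hx))
      fun x hx => linearized_riccati_nonneg (by nlinarith [hx.1, hx.2]) (hineq x hx)
  have hw : Tendsto (fun x => U x - V x) (𝓝[>] (-1)) (𝓝 (U (-1) - V (-1))) :=
    (((hU0.sub hV0) (-1) (left_mem_Icc.2 ha.le)).mono_of_mem_nhdsWithin (Icc_mem_nhdsGT ha)).tendsto
  have hlim :
      Tendsto (fun x => exp (integratingExponent a U x) * (U x - V x)) (𝓝[>] (-1)) (𝓝 0) := by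
    rcases hcond with ⟨hVU, hV2⟩ | ⟨hU2, hV2, hbdd⟩
    · simpa using (tendsto_exp_atBot.comp
        (tendsto_integratingExponent_atBot ha ha' hU0 (hV2.trans_le hVU))).mul hw
    · exact isBoundedUnder_le_mul_tendsto_zero (isBoundedUnder_exp_integratingExponent hbdd)
        (by simpa [hU2, hV2] using hw)
  rcases pos_or_exists_eqOn_zero_of_monotoneOn_exp_mul hmono hlim with hpos | ⟨z, hz, hzero⟩
  · exact Or.inl fun x hx => sub_pos.1 (hpos x hx)
  · refine Or.inr ⟨z + 1, ⟨by linarith [hz.1], by linarith [hz.2]⟩, fun x hx => ?_⟩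
    exact sub_eq_zero.1 (hzero (by simpa using hx))
end
end

section
/- Let 0 < δ < 2 and let U, Ũ be functions that are C¹ on [1-δ,1) and continuous on [1-δ,1], satisfying (1-x²)U'(x) + 2x·U(x) + (1/2)U(x)² ≥ (1-x²)Ũ'(x) + 2x·Ũ(x) + (1/2)Ũ(x)² for all x ∈ (1-δ,1). Assume that either (i) U(1) ≤ Ũ(1) < -2, or (ii) U(1) = Ũ(1) = -2 and limsup_{x→1⁻} ∫_{1-δ}^{x} (U(s) + 2)/(1-s²) ds < +∞. Then either U(x) < Ũ(x) for all x ∈ (1-δ,1), or there exists δ' ∈ (0,δ) such that U ≡ Ũ on (1-δ',1). -/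
/-!
Subtracting the two inequalities, `w = Ũ - U` satisfies the linear differential inequality
`w' + q w ≤ 0` on `(1-δ, 1)`, with `q = (2x + (U + Ũ)/2)/(1 - x²)`. With the integrating factor
`e^F`, `F' = q`, the function `w e^F` is nonincreasing. Hence, if `w(x₀) ≤ 0` for some `x₀`, then
`w ≤ 0` on `[x₀, 1)`, and by continuity `w(1) ≤ 0`, which each alternative turns into `w(1) = 0`.
If moreover `F` is bounded above near `1`, a point `x₁ ≥ x₀` with `w(x₁) < 0` would keep
`w(x) ≤ w(x₁) e^{F(x₁) - F(x)}` below a negative constant as `x → 1⁻`, so `w = 0` on `[x₀, 1)`.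
The bound on `F` comes from `q ≤ 0` near `1` in case (i) (there `2 + Ũ(1) < 0`), and from
`q ≤ (U + 2)/(1 - x²)` in case (ii), which uses `Ũ ≤ U` on `[x₀, 1)`.
-/

open Set Filter Real Topology

noncomputable section

theorem hasDerivAt_integral_of_continuousOn {q : ℝ → ℝ} {s : Set ℝ} {a x : ℝ}
    (hs : s.OrdConnected) (hq : ContinuousOn q s) (ha : a ∈ s) (hx : s ∈ 𝓝 x) :
    HasDerivAt (fun y => ∫ t in a..y, q t) (q x) x :=
  intervalIntegral.integral_hasDerivAt_right
    ((hq.mono (hs.uIcc_subset ha (mem_of_mem_nhds hx))).intervalIntegrable)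
    ((hq.mono interior_subset).stronglyMeasurableAtFilter isOpen_interior x
      (mem_interior_iff_mem_nhds.2 hx))
    (hq.continuousAt hx)

section IntegratingFactor

variable {w w' F q : ℝ → ℝ}

theorem antitoneOn_mul_exp_of_deriv_add_mul_nonpos {D : Set ℝ} (hD : Convex ℝ D)
    (hw : ∀ x ∈ D, HasDerivAt w (w' x) x) (hF : ∀ x ∈ D, HasDerivAt F (q x) x)
    (h : ∀ x ∈ interior D, w' x + q x * w x ≤ 0) :
    AntitoneOn (fun x => w x * exp (F x)) D := by
  have hg : ∀ x ∈ D, HasDerivAt (fun x => w x * exp (F x)) ((w' x + q x * w x) * exp (F x)) x :=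
    fun x hx => ((hw x hx).mul (hF x hx).exp).congr_deriv (by ring)
  refine antitoneOn_of_hasDerivWithinAt_nonpos hD
    (fun x hx => (hg x hx).continuousAt.continuousWithinAt)
    (fun x hx => (hg x (interior_subset hx)).hasDerivWithinAt) fun x hx => ?_
  exact mul_nonpos_of_nonpos_of_nonneg (h x hx) (exp_pos _).le

variable {a b : ℝ}

theorem nonpos_of_antitoneOn_mul_exp (hg : AntitoneOn (fun x => w x * exp (F x)) (Ico a b))
    (ha : w a ≤ 0) : ∀ x ∈ Ico a b, w x ≤ 0 := by
  intro x hx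
  have : w x * exp (F x) ≤ w a * exp (F a) := hg ⟨le_rfl, hx.1.trans_lt hx.2⟩ hx hx.1
  nlinarith [exp_pos (F x), exp_pos (F a)]

theorem nonneg_of_antitoneOn_mul_exp (hg : AntitoneOn (fun x => w x * exp (F x)) (Ico a b))
    (hw : Tendsto w (𝓝[<] b) (𝓝 0)) (hF : IsBoundedUnder (· ≤ ·) (𝓝[<] b) F) :
    ∀ x ∈ Ico a b, 0 ≤ w x := by
  intro x hx
  by_contra! hneg
  obtain ⟨M, hM⟩ := hF
  set c := w x * exp (F x)
  have hc : c < 0 := mul_neg_of_neg_of_pos hneg (exp_pos _)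
  have hbound : ∀ᶠ y in 𝓝[<] b, w y ≤ c / exp M := by
    filter_upwards [eventually_map.1 hM, Ioo_mem_nhdsLT hx.2] with y hFy hy
    have hwy : w y * exp (F y) ≤ c := hg hx ⟨hx.1.trans hy.1.le, hy.2⟩ hy.1.le
    calc w y ≤ c / exp (F y) := (le_div_iff₀ (exp_pos _)).2 hwy
      _ ≤ c / exp M := by
        rw [div_le_div_iff₀ (exp_pos _) (exp_pos _)]
        exact mul_le_mul_of_nonpos_left (exp_le_exp.2 hFy) hc.le
  have : (0 : ℝ) ≤ c / exp M := le_of_tendsto hw hbound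
  exact (div_neg_of_neg_of_pos hc (exp_pos M)).not_ge this

end IntegratingFactor

theorem isBoundedUnder_le_of_hasDerivAt_le {F K q k : ℝ → ℝ} {b : ℝ}
    (hF : ∀ᶠ x in 𝓝[<] b, HasDerivAt F (q x) x) (hK : ∀ᶠ x in 𝓝[<] b, HasDerivAt K (k x) x)
    (hqk : ∀ᶠ x in 𝓝[<] b, q x ≤ k x) (hKb : IsBoundedUnder (· ≤ ·) (𝓝[<] b) K) :
    IsBoundedUnder (· ≤ ·) (𝓝[<] b) F := by
  obtain ⟨l, hl : l < b, hsub⟩ := mem_nhdsLT_iff_exists_Ioo_subset.1 ((hF.and hK).and hqk)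
  have hd : ∀ x ∈ Ioo l b, HasDerivAt (fun x => F x - K x) (q x - k x) x :=
    fun x hx => (hsub hx).1.1.sub (hsub hx).1.2
  have hanti : AntitoneOn (fun x => F x - K x) (Ioo l b) :=
    antitoneOn_of_hasDerivWithinAt_nonpos (convex_Ioo l b)
      (fun x hx => (hd x hx).continuousAt.continuousWithinAt)
      (fun x hx => (hd x (interior_subset hx)).hasDerivWithinAt)
      fun x hx => sub_nonpos.2 (hsub (interior_subset hx)).2
  obtain ⟨c, hc⟩ := nonempty_Ioo.2 hl
  obtain ⟨M, hM⟩ := hKb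
  refine ⟨M + (F c - K c), eventually_map.2 ?_⟩
  filter_upwards [eventually_map.1 hM, Ioo_mem_nhdsLT hc.2] with x hKx hx
  have := hanti hc ⟨hc.1.trans hx.1, hx.2⟩ hx.1.le
  linarith

theorem one_sub_sq_pos {s : ℝ} (hs : s ∈ Ioo (-1 : ℝ) 1) : 0 < 1 - s ^ 2 := by
  nlinarith [hs.1, hs.2]

theorem hasDerivAt_integral_div_one_sub_sq {f : ℝ → ℝ} {a c x : ℝ} (ha : -1 < a)
    (hf : ContinuousOn f (Ico a 1)) (hc : c ∈ Ico a 1) (hx : x ∈ Ioo a 1) :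
    HasDerivAt (fun y => ∫ t in c..y, f t / (1 - t ^ 2)) (f x / (1 - x ^ 2)) x :=
  hasDerivAt_integral_of_continuousOn ordConnected_Ico
    (hf.div (by fun_prop) fun s hs => (one_sub_sq_pos ⟨ha.trans_le hs.1, hs.2⟩).ne') hc
    (Ico_mem_nhds hx.1 hx.2)

theorem ContinuousOn.tendsto_nhdsLT_right {f : ℝ → ℝ} {a b : ℝ} (hf : ContinuousOn f (Icc a b))
    (hab : a < b) : Tendsto f (𝓝[<] b) (𝓝 (f b)) :=
  (hf b ⟨hab.le, le_rfl⟩).mono_of_mem_nhdsWithin (Icc_mem_nhdsLT hab)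

theorem sub_add_div_mul_sub_nonpos_of_le {x u v u' v' : ℝ} (hx : 0 < 1 - x ^ 2)
    (h : (1 - x ^ 2) * v' + 2 * x * v + (1 / 2) * v ^ 2 ≤
      (1 - x ^ 2) * u' + 2 * x * u + (1 / 2) * u ^ 2) :
    v' - u' + (2 * x + (u + v) / 2) / (1 - x ^ 2) * (v - u) ≤ 0 := by
  have hfactor : v' - u' + (2 * x + (u + v) / 2) / (1 - x ^ 2) * (v - u) =
      ((1 - x ^ 2) * v' + 2 * x * v + (1 / 2) * v ^ 2 -
        ((1 - x ^ 2) * u' + 2 * x * u + (1 / 2) * u ^ 2)) / (1 - x ^ 2) := by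
    field_simp
    ring
  rw [hfactor]
  exact div_nonpos_of_nonpos_of_nonneg (by linarith) hx.le

def riccatiCoeff (U V : ℝ → ℝ) (s : ℝ) : ℝ := (2 * s + (U s + V s) / 2) / (1 - s ^ 2)

section RiccatiComparison

variable {U V : ℝ → ℝ} {a x₀ : ℝ}

theorem hasDerivAt_integral_riccatiCoeff (ha : -1 < a) (hU : ContinuousOn U (Ico a 1))
    (hV : ContinuousOn V (Ico a 1)) (hx₀ : x₀ ∈ Ico a 1) {x : ℝ} (hx : x ∈ Ioo a 1) :
    HasDerivAt (fun y => ∫ t in x₀..y, riccatiCoeff U V t) (riccatiCoeff U V x) x :=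
  hasDerivAt_integral_div_one_sub_sq (f := fun t => 2 * t + (U t + V t) / 2) ha (by fun_prop)
    hx₀ hx

theorem antitoneOn_sub_mul_exp_integral_riccatiCoeff (ha : -1 < a)
    (hU : ContDiffOn ℝ 1 U (Ico a 1)) (hV : ContDiffOn ℝ 1 V (Ico a 1))
    (hineq : ∀ x ∈ Ioo a 1,
      (1 - x ^ 2) * deriv V x + 2 * x * V x + (1 / 2) * (V x) ^ 2 ≤
      (1 - x ^ 2) * deriv U x + 2 * x * U x + (1 / 2) * (U x) ^ 2)
    (hx₀ : x₀ ∈ Ioo a 1) :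
    AntitoneOn (fun x => (V x - U x) * exp (∫ t in x₀..x, riccatiCoeff U V t)) (Ico x₀ 1) := by
  have hsub : Ico x₀ 1 ⊆ Ioo a 1 := fun x hx => ⟨hx₀.1.trans_le hx.1, hx.2⟩
  have hderiv : ∀ {f : ℝ → ℝ}, ContDiffOn ℝ 1 f (Ico a 1) →
      ∀ x ∈ Ioo a 1, HasDerivAt f (deriv f x) x := fun hf x hx =>
    (hf.contDiffAt (Ico_mem_nhds hx.1 hx.2)).differentiableAt_one.hasDerivAt
  refine antitoneOn_mul_exp_of_deriv_add_mul_nonpos (convex_Ico x₀ 1)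
    (fun x hx => (hderiv hV x (hsub hx)).sub (hderiv hU x (hsub hx)))
    (fun x hx => hasDerivAt_integral_riccatiCoeff ha hU.continuousOn hV.continuousOn
      (Ioo_subset_Ico_self hx₀) (hsub hx)) fun x hx => ?_
  rw [interior_Ico] at hx
  have hx' : x ∈ Ioo a 1 := hsub (Ioo_subset_Ico_self hx)
  exact sub_add_div_mul_sub_nonpos_of_le (one_sub_sq_pos ⟨ha.trans hx'.1, hx'.2⟩) (hineq x hx')

theorem isBoundedUnder_integral_riccatiCoeff_of_add_lt (ha : -1 < a)
    (hU : ContinuousOn U (Icc a 1)) (hV : ContinuousOn V (Icc a 1)) (hx₀ : x₀ ∈ Ico a 1)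
    (h : U 1 + V 1 < -4) :
    IsBoundedUnder (· ≤ ·) (𝓝[<] 1) fun x => ∫ t in x₀..x, riccatiCoeff U V t := by
  have hab : a < 1 := hx₀.1.trans_lt hx₀.2
  have hnum : Tendsto (fun s => 2 * s + (U s + V s) / 2) (𝓝[<] 1)
      (𝓝 (2 * 1 + (U 1 + V 1) / 2)) :=
    ((tendsto_id.mono_left nhdsWithin_le_nhds).const_mul 2).add
      (((hU.tendsto_nhdsLT_right hab).add (hV.tendsto_nhdsLT_right hab)).div_const 2)
  have hq : ∀ᶠ s in 𝓝[<] 1, riccatiCoeff U V s ≤ 0 := by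
    filter_upwards [hnum.eventually_lt_const (show _ < (0 : ℝ) by linarith),
      Ioo_mem_nhdsLT (by norm_num : (-1 : ℝ) < 1)] with s hs hs'
    exact div_nonpos_of_nonpos_of_nonneg hs.le (one_sub_sq_pos hs').le
  exact isBoundedUnder_le_of_hasDerivAt_le (k := 0)
    (eventually_of_mem (Ioo_mem_nhdsLT hab) fun x hx => hasDerivAt_integral_riccatiCoeff ha
      (hU.mono Ico_subset_Icc_self) (hV.mono Ico_subset_Icc_self) hx₀ hx)
    (Eventually.of_forall fun x => hasDerivAt_const x 0) hq isBoundedUnder_const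

theorem isBoundedUnder_integral_riccatiCoeff_of_le (ha : -1 < a)
    (hU : ContinuousOn U (Ico a 1)) (hV : ContinuousOn V (Ico a 1)) (hx₀ : x₀ ∈ Ico a 1)
    (hVU : ∀ x ∈ Ico x₀ 1, V x ≤ U x)
    (hK : IsBoundedUnder (· ≤ ·) (𝓝[<] 1) fun x => ∫ t in a..x, (U t + 2) / (1 - t ^ 2)) :
    IsBoundedUnder (· ≤ ·) (𝓝[<] 1) fun x => ∫ t in x₀..x, riccatiCoeff U V t := by
  have hab : a < 1 := hx₀.1.trans_lt hx₀.2
  refine isBoundedUnder_le_of_hasDerivAt_le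
    (eventually_of_mem (Ioo_mem_nhdsLT hab) fun x hx =>
      hasDerivAt_integral_riccatiCoeff ha hU hV hx₀ hx)
    (eventually_of_mem (Ioo_mem_nhdsLT hab) fun x hx =>
      hasDerivAt_integral_div_one_sub_sq (f := fun t => U t + 2) ha
        (hU.add continuousOn_const) ⟨le_rfl, hab⟩ hx) ?_ hK
  filter_upwards [Ico_mem_nhdsLT hx₀.2] with x hx
  exact div_le_div_of_nonneg_right (by linarith [hVU x hx, hx.2])
    (one_sub_sq_pos ⟨ha.trans_le (hx₀.1.trans hx.1), hx.2⟩).le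

end RiccatiComparison

/-- `V` plays the role of `Ũ`. -/
theorem statement14_general (δ : ℝ) (hδ2 : δ < 2) (U V : ℝ → ℝ)
    (hU1 : ContDiffOn ℝ 1 U (Ico (1 - δ) (1 : ℝ)))
    (hU0 : ContinuousOn U (Icc (1 - δ) (1 : ℝ)))
    (hV1 : ContDiffOn ℝ 1 V (Ico (1 - δ) (1 : ℝ)))
    (hV0 : ContinuousOn V (Icc (1 - δ) (1 : ℝ)))
    (hineq : ∀ x ∈ Ioo (1 - δ) (1 : ℝ),
      (1 - x ^ 2) * deriv V x + 2 * x * V x + (1 / 2) * (V x) ^ 2 ≤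
      (1 - x ^ 2) * deriv U x + 2 * x * U x + (1 / 2) * (U x) ^ 2)
    (hcond :
      -- (i) U(1) ≤ Ũ(1) < -2
      (U 1 ≤ V 1 ∧ V 1 < -2) ∨
      -- (ii) U(1) = Ũ(1) = -2 and limsup_{x→1⁻} ∫_{1-δ}^x (U(s)+2)/(1-s²) ds < +∞
      (U 1 = -2 ∧ V 1 = -2 ∧
        Filter.IsBoundedUnder (· ≤ ·) (𝓝[<] (1 : ℝ))
          (fun x : ℝ => ∫ s in (1 - δ)..x, (U s + 2) / (1 - s ^ 2)))) :
    (∀ x ∈ Ioo (1 - δ) (1 : ℝ), U x < V x) ∨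
    (∃ δ' : ℝ, δ' ∈ Ioo (0 : ℝ) δ ∧ EqOn U V (Ioo (1 - δ') (1 : ℝ))) := by
  by_cases hlt : ∀ x ∈ Ioo (1 - δ) (1 : ℝ), U x < V x
  · exact Or.inl hlt
  push Not at hlt
  obtain ⟨x₀, hx₀, hVU⟩ := hlt
  have ha : -1 < 1 - δ := by linarith
  have h1 : 1 - δ < 1 := hx₀.1.trans hx₀.2
  have hg := antitoneOn_sub_mul_exp_integral_riccatiCoeff ha hU1 hV1 hineq hx₀
  have hle := nonpos_of_antitoneOn_mul_exp hg (by linarith)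
  have hw_lim := (hV0.tendsto_nhdsLT_right h1).sub (hU0.tendsto_nhdsLT_right h1)
  have hw1 : V 1 - U 1 = 0 :=
    le_antisymm (le_of_tendsto hw_lim (eventually_of_mem (Ico_mem_nhdsLT hx₀.2) hle))
      (by rcases hcond with h | h <;> linarith [h.1, h.2])
  have hF : IsBoundedUnder (· ≤ ·) (𝓝[<] 1) fun x => ∫ t in x₀..x, riccatiCoeff U V t := by
    rcases hcond with h | ⟨-, -, hK⟩
    · exact isBoundedUnder_integral_riccatiCoeff_of_add_lt ha hU0 hV0 (Ioo_subset_Ico_self hx₀)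
        (by linarith [h.1, h.2])
    · exact isBoundedUnder_integral_riccatiCoeff_of_le ha hU1.continuousOn hV1.continuousOn
        (Ioo_subset_Ico_self hx₀) (fun x hx => by linarith [hle x hx]) hK
  have hge := nonneg_of_antitoneOn_mul_exp hg (hw1 ▸ hw_lim) hF
  refine Or.inr ⟨1 - x₀, ⟨by linarith [hx₀.2], by linarith [hx₀.1]⟩, fun x hx => ?_⟩
  rw [sub_sub_cancel] at hx
  linarith [hle x (Ioo_subset_Ico_self hx), hge x (Ioo_subset_Ico_self hx)]

/-- comparison lemma near the right endpoint `1`. Here `V` plays the role of `Ũ`. -/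
theorem statement14 (δ : ℝ) (hδ1 : 0 < δ) (hδ2 : δ < 2) (U V : ℝ → ℝ)
    (hU1 : ContDiffOn ℝ 1 U (Ico (1 - δ) (1 : ℝ)))
    (hU0 : ContinuousOn U (Icc (1 - δ) (1 : ℝ)))
    (hV1 : ContDiffOn ℝ 1 V (Ico (1 - δ) (1 : ℝ)))
    (hV0 : ContinuousOn V (Icc (1 - δ) (1 : ℝ)))
    (hineq : ∀ x ∈ Ioo (1 - δ) (1 : ℝ),
      (1 - x ^ 2) * deriv V x + 2 * x * V x + (1 / 2) * (V x) ^ 2 ≤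
      (1 - x ^ 2) * deriv U x + 2 * x * U x + (1 / 2) * (U x) ^ 2)
    (hcond :
      -- (i) U(1) ≤ Ũ(1) < -2
      (U 1 ≤ V 1 ∧ V 1 < -2) ∨
      -- (ii) U(1) = Ũ(1) = -2 and limsup_{x→1⁻} ∫_{1-δ}^x (U(s)+2)/(1-s²) ds < +∞
      (U 1 = -2 ∧ V 1 = -2 ∧
        Filter.IsBoundedUnder (· ≤ ·) (𝓝[<] (1 : ℝ))
          (fun x : ℝ => ∫ s in (1 - δ)..x, (U s + 2) / (1 - s ^ 2)))) :
    (∀ x ∈ Ioo (1 - δ) (1 : ℝ), U x < V x) ∨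
    (∃ δ' : ℝ, δ' ∈ Ioo (0 : ℝ) δ ∧ EqOn U V (Ioo (1 - δ') (1 : ℝ))) :=
  statement14_general δ hδ2 U V hU1 hU0 hV1 hV0 hineq hcond
end
end

section
/- Let c₁ > -1, c₂, c₃ ∈ ℝ, and 0 < δ < 2. Then there exists at most one C¹ solution U of (★) on (-1,-1+δ) satisfying lim_{x→-1⁺} U(x) = τ₂(c₁). -/
/-!
The difference `W = U - V` of two solutions satisfies the linear equation
`(1 - x²) W' = -(2x + (U + V)/2) W`. Since `U + V → 2τ₂(c₁)`, the coefficient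
`2x + (U + V)/2` tends to `2√(1 + c₁) > 0` at `-1`, so `W²` is nonincreasing near `-1`;
as it tends to `0` there, `W` vanishes near `-1`. Uniqueness for the linear equation
(Gronwall) propagates `W = 0` to the whole interval.
-/

open Set Filter Real Topology

noncomputable section

theorem hasDerivAt_sub_of_starEq {c₁ c₂ c₃ x : ℝ} {U V : ℝ → ℝ}
    (hU : DifferentiableAt ℝ U x) (hV : DifferentiableAt ℝ V x) (hx : 1 - x ^ 2 ≠ 0)
    (hUx : StarEq c₁ c₂ c₃ U x) (hVx : StarEq c₁ c₂ c₃ V x) :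
    HasDerivAt (U - V) (-(2 * x + (U x + V x) / 2) / (1 - x ^ 2) * (U - V) x) x := by
  have hderiv : deriv U x - deriv V x
      = -(2 * x + (U x + V x) / 2) / (1 - x ^ 2) * (U - V) x := by
    rw [div_mul_eq_mul_div, eq_div_iff hx, Pi.sub_apply]
    unfold StarEq at hUx hVx
    linear_combination hUx - hVx
  exact hderiv ▸ hU.hasDerivAt.sub hV.hasDerivAt

theorem eqOn_zero_of_hasDerivAt_mul_of_nonpos {A W : ℝ → ℝ} {a b : ℝ}
    (hW : ∀ t ∈ Ioo a b, HasDerivAt W (A t * W t) t) (hA : ∀ t ∈ Ioo a b, A t ≤ 0)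
    (hlim : Tendsto W (𝓝[>] a) (𝓝 0)) : EqOn W 0 (Ioo a b) := by
  have hsq : ∀ t ∈ Ioo a b, HasDerivAt (fun s => W s ^ 2) (2 * A t * W t ^ 2) t :=
    fun t ht => ((hW t ht).pow 2).congr_deriv (by ring)
  have hanti : AntitoneOn (fun s => W s ^ 2) (Ioo a b) := by
    refine antitoneOn_of_hasDerivWithinAt_nonpos (f' := fun t => 2 * A t * W t ^ 2)
      (convex_Ioo a b) (fun t ht => (hsq t ht).continuousAt.continuousWithinAt) ?_ ?_ <;>
      rw [interior_Ioo]
    · exact fun t ht => (hsq t ht).hasDerivWithinAt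
    · exact fun t ht => mul_nonpos_of_nonpos_of_nonneg (by linarith [hA t ht]) (sq_nonneg _)
  intro y hy
  have hle : ∀ᶠ x in 𝓝[>] a, W y ^ 2 ≤ W x ^ 2 := by
    filter_upwards [Ioo_mem_nhdsGT hy.1] with x hx
    exact hanti ⟨hx.1, hx.2.trans hy.2⟩ hy hx.2.le
  have hy0 : W y ^ 2 ≤ 0 := ge_of_tendsto (by simpa using hlim.pow 2) hle
  exact pow_eq_zero_iff two_ne_zero |>.mp (le_antisymm hy0 (sq_nonneg _))

theorem eqOn_zero_of_hasDerivAt_mul_of_eq_zero {A W : ℝ → ℝ} {p q : ℝ}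
    (hA : ContinuousOn A (Icc p q)) (hW : ∀ t ∈ Icc p q, HasDerivAt W (A t * W t) t)
    (hp : W p = 0) : EqOn W 0 (Icc p q) := by
  obtain ⟨K, hK⟩ := isCompact_Icc.exists_bound_of_continuousOn hA
  intro x hx
  have hbound := norm_le_gronwallBound_of_norm_deriv_right_le (f := W)
    (f' := fun t => A t * W t) (δ := 0) (K := K) (ε := 0)
    (fun t ht => (hW t ht).continuousAt.continuousWithinAt)
    (fun t ht => (hW t (Ico_subset_Icc_self ht)).hasDerivWithinAt)
    (by simp [hp])
    (fun t ht => by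
      rw [norm_mul, add_zero]
      exact mul_le_mul_of_nonneg_right (hK t (Ico_subset_Icc_self ht)) (norm_nonneg _))
    x hx
  rwa [gronwallBound_ε0, zero_mul, norm_le_zero_iff] at hbound

theorem eqOn_zero_of_hasDerivAt_mul_of_eventually_nonpos {A W : ℝ → ℝ} {a b : ℝ}
    (hW : ∀ t ∈ Ioo a b, HasDerivAt W (A t * W t) t) (hA : ContinuousOn A (Ioo a b))
    (hA_nonpos : ∀ᶠ t in 𝓝[>] a, A t ≤ 0) (hlim : Tendsto W (𝓝[>] a) (𝓝 0)) :
    EqOn W 0 (Ioo a b) := by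
  obtain ⟨u, hau, hAu⟩ := mem_nhdsGT_iff_exists_Ioo_subset.mp hA_nonpos
  have hzero : EqOn W 0 (Ioo a (min u b)) :=
    eqOn_zero_of_hasDerivAt_mul_of_nonpos
      (fun t ht => hW t ⟨ht.1, ht.2.trans_le (min_le_right _ _)⟩)
      (fun t ht => hAu ⟨ht.1, ht.2.trans_le (min_le_left _ _)⟩) hlim
  intro x hx
  rcases lt_or_ge x u with hxu | hux
  · exact hzero ⟨hx.1, lt_min hxu hx.2⟩
  · have hau : a < u := hau
    have hp : (a + u) / 2 ∈ Ioo a (min u b) :=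
      ⟨by linarith, lt_min (by linarith) (by linarith [hx.2])⟩
    have hIcc : Icc ((a + u) / 2) x ⊆ Ioo a b := Icc_subset_Ioo hp.1 hx.2
    exact eqOn_zero_of_hasDerivAt_mul_of_eq_zero (hA.mono hIcc) (fun t ht => hW t (hIcc ht))
      (hzero hp) ⟨by linarith, le_rfl⟩

theorem statement15_general (c₁ c₂ c₃ δ : ℝ) (h1 : -1 < c₁) (hδ2 : δ < 2)
    (U V : ℝ → ℝ)
    (hU : IsSolOn c₁ c₂ c₃ U (Ioo (-1 : ℝ) (-1 + δ)))
    (hUl : Tendsto U (𝓝[>] (-1 : ℝ)) (𝓝 (tau2 c₁)))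
    (hV : IsSolOn c₁ c₂ c₃ V (Ioo (-1 : ℝ) (-1 + δ)))
    (hVl : Tendsto V (𝓝[>] (-1 : ℝ)) (𝓝 (tau2 c₁))) :
    EqOn U V (Ioo (-1 : ℝ) (-1 + δ)) := by
  set I := Ioo (-1 : ℝ) (-1 + δ)
  set A : ℝ → ℝ := fun t => -(2 * t + (U t + V t) / 2) / (1 - t ^ 2)
  have hden : ∀ x ∈ I, 0 < 1 - x ^ 2 := fun x hx => by nlinarith [hx.1, hx.2]
  have hW : ∀ x ∈ I, HasDerivAt (U - V) (A x * (U - V) x) x := fun x hx =>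
    have hxI : I ∈ 𝓝 x := isOpen_Ioo.mem_nhds hx
    hasDerivAt_sub_of_starEq ((hU.1.contDiffAt hxI).differentiableAt one_ne_zero)
      ((hV.1.contDiffAt hxI).differentiableAt one_ne_zero) (hden x hx).ne' (hU.2 x hx) (hV.2 x hx)
  have hA : ContinuousOn A I := by
    have hUV : ContinuousOn (fun t => U t + V t) I := hU.1.continuousOn.add hV.1.continuousOn
    exact ContinuousOn.div (by fun_prop) (by fun_prop) fun x hx => (hden x hx).ne'
  have hcoeff : Tendsto (fun x => 2 * x + (U x + V x) / 2) (𝓝[>] (-1 : ℝ))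
      (𝓝 (2 * √(1 + c₁))) := by
    have hlim := ((tendsto_id.mono_left nhdsWithin_le_nhds).const_mul 2).add
      ((hUl.add hVl).div_const 2)
    rwa [show 2 * -1 + (tau2 c₁ + tau2 c₁) / 2 = 2 * √(1 + c₁) by unfold tau2; ring] at hlim
  have hA_nonpos : ∀ᶠ x in 𝓝[>] (-1 : ℝ), A x ≤ 0 := by
    have hsqrt : 0 < 2 * √(1 + c₁) := mul_pos two_pos (Real.sqrt_pos.mpr (by linarith))
    filter_upwards [hcoeff.eventually (eventually_gt_nhds hsqrt),
      Ioo_mem_nhdsGT (show (-1 : ℝ) < 1 by norm_num)] with x hpos hx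
    exact div_nonpos_of_nonpos_of_nonneg (by linarith) (by nlinarith [hx.1, hx.2])
  intro x hx
  exact sub_eq_zero.mp <| eqOn_zero_of_hasDerivAt_mul_of_eventually_nonpos hW hA hA_nonpos
    (sub_self (tau2 c₁) ▸ hUl.sub hVl) hx

/-- uniqueness of the solution with boundary value `τ₂(c₁)` at `-1`. -/
theorem statement15 (c₁ c₂ c₃ δ : ℝ) (h1 : -1 < c₁) (hδ1 : 0 < δ) (hδ2 : δ < 2)
    (U V : ℝ → ℝ)
    (hU : IsSolOn c₁ c₂ c₃ U (Ioo (-1 : ℝ) (-1 + δ)))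
    (hUl : Tendsto U (𝓝[>] (-1 : ℝ)) (𝓝 (tau2 c₁)))
    (hV : IsSolOn c₁ c₂ c₃ V (Ioo (-1 : ℝ) (-1 + δ)))
    (hVl : Tendsto V (𝓝[>] (-1 : ℝ)) (𝓝 (tau2 c₁))) :
    EqOn U V (Ioo (-1 : ℝ) (-1 + δ)) :=
  statement15_general c₁ c₂ c₃ δ h1 hδ2 U V hU hUl hV hVl
end
end

section
/- Let c₁ ≥ -1, c₂ ≥ -1, and c₃ = c̄₃(c₁,c₂). Then U*(x) := (1+√(1+c₁))(1-x) + (-1-√(1+c₂))(1+x) is the unique C¹ solution of (★) on (-1,1); in particular U*(-1) = τ₂(c₁) and U*(1) = τ₁'(c₂). -/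
open Set Filter Real Topology

noncomputable section

/-!
Writing `U = U* + V` with `a = √(1 + c₁)`, `b = √(1 + c₂)`, the deviation solves the Bernoulli
equation `(1 - x²) V' + (a - b - (a + b) x) V + V² / 2 = 0`. The weight `w = (1 - x)^b (1 + x)^a`
integrates its linear part: `F = w V` satisfies `F' = -g F²` with `g = 1 / (2 (1 - x²) w)`, and
`g ≥ κ / (1 - x²)` because `a, b ≥ 0`. So `F` is nonincreasing; if `F(x₀) > 0`, then `1 / F` is
positive on `(-1, x₀]` with derivative `g`, which is not integrable at `-1`, forcing `1 / F → -∞`.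
The reflection `x ↦ -x` rules out `F(x₀) < 0` in the same way.
-/

theorem tendsto_nhdsGT_atBot_of_div_le_deriv {G G' : ℝ → ℝ} {l r κ : ℝ} (hκ : 0 < κ)
    (hlr : l < r) (hG : ∀ x ∈ Ioc l r, HasDerivAt G (G' x) x)
    (hG' : ∀ x ∈ Ioc l r, κ / (x - l) ≤ G' x) :
    Tendsto G (𝓝[>] l) atBot := by
  set H : ℝ → ℝ := fun x => G x - κ * Real.log (x - l)
  have hH : ∀ x ∈ Ioc l r, HasDerivAt H (G' x - κ * (x - l)⁻¹) x := fun x hx =>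
    (hG x hx).sub <| ((((hasDerivAt_id x).sub_const l).log (sub_pos.2 hx.1).ne').const_mul
      κ).congr_deriv (by simp [div_eq_mul_inv])
  have hmono : MonotoneOn H (Ioc l r) := by
    refine monotoneOn_of_hasDerivWithinAt_nonneg (convex_Ioc l r)
      (fun x hx => (hH x hx).continuousAt.continuousWithinAt)
      (fun x hx => (hH x (interior_subset hx)).hasDerivWithinAt) fun x hx => ?_
    have := hG' x (interior_subset hx)
    rw [div_eq_mul_inv] at this
    linarith
  have hlog : Tendsto (fun x => H r + κ * Real.log (x - l)) (𝓝[>] l) atBot := by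
    refine tendsto_atBot_add_const_left _ _ (Tendsto.const_mul_atBot hκ ?_)
    refine Real.tendsto_log_nhdsGT_zero.comp ?_
    refine tendsto_nhdsWithin_iff.2
      ⟨?_, eventually_nhdsWithin_of_forall fun _ hx => mem_Ioi.2 (sub_pos.2 hx)⟩
    simpa using tendsto_nhdsWithin_of_tendsto_nhds ((continuous_sub_right l).tendsto l)
  refine tendsto_atBot_mono' _ ?_ hlog
  filter_upwards [Ioc_mem_nhdsGT hlr] with x hx
  have := hmono hx (right_mem_Ioc.2 hlr) hx.2
  simp only [H] at this
  linarith

theorem nonpos_of_hasDerivAt_neg_mul_sq {F g : ℝ → ℝ} {κ : ℝ} (hκ : 0 < κ)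
    (hF : ∀ x ∈ Ioo (-1 : ℝ) 1, HasDerivAt F (-(g x * F x ^ 2)) x)
    (hg : ∀ x ∈ Ioo (-1 : ℝ) 1, κ / (1 - x ^ 2) ≤ g x) :
    ∀ x ∈ Ioo (-1 : ℝ) 1, F x ≤ 0 := by
  intro x₀ hx₀
  by_contra! hFx₀
  have hanti : AntitoneOn F (Ioo (-1) 1) := by
    refine antitoneOn_of_hasDerivWithinAt_nonpos (convex_Ioo _ _)
      (fun x hx => (hF x hx).continuousAt.continuousWithinAt)
      (fun x hx => (hF x (interior_subset hx)).hasDerivWithinAt) fun x hx => ?_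
    rw [interior_Ioo] at hx
    have : 0 < κ / (1 - x ^ 2) := div_pos hκ (by nlinarith [hx.1, hx.2])
    have := hg x hx
    nlinarith [sq_nonneg (F x)]
  have hsub : Ioc (-1) x₀ ⊆ Ioo (-1 : ℝ) 1 := Ioc_subset_Ioo_right hx₀.2
  have hpos : ∀ x ∈ Ioc (-1) x₀, 0 < F x := fun x hx =>
    hFx₀.trans_le (hanti (hsub hx) hx₀ hx.2)
  have hinv : Tendsto (fun x => (F x)⁻¹) (𝓝[>] (-1)) atBot := by
    refine tendsto_nhdsGT_atBot_of_div_le_deriv (half_pos hκ) hx₀.1 (G' := g)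
      (fun x hx => ((hF x (hsub hx)).inv (hpos x hx).ne').congr_deriv ?_) fun x hx => ?_
    · field_simp [(hpos x hx).ne']
    · have hx' := hsub hx
      calc κ / 2 / (x - -1) ≤ κ / (1 - x ^ 2) := by
            rw [div_div]
            apply div_le_div_of_nonneg_left hκ.le (by nlinarith [hx'.1, hx'.2])
            nlinarith [hx'.1, hx'.2]
        _ ≤ g x := hg x hx'
  obtain ⟨x, hx, hneg⟩ :=
    (Eventually.and (Ioc_mem_nhdsGT hx₀.1) (hinv.eventually (eventually_le_atBot 0))).exists
  exact (inv_pos.2 (hpos x hx)).not_ge hneg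

theorem eqOn_zero_of_hasDerivAt_neg_mul_sq {F g : ℝ → ℝ} {κ : ℝ} (hκ : 0 < κ)
    (hF : ∀ x ∈ Ioo (-1 : ℝ) 1, HasDerivAt F (-(g x * F x ^ 2)) x)
    (hg : ∀ x ∈ Ioo (-1 : ℝ) 1, κ / (1 - x ^ 2) ≤ g x) :
    EqOn F 0 (Ioo (-1) 1) := by
  have hneg : ∀ x ∈ Ioo (-1 : ℝ) 1, -x ∈ Ioo (-1 : ℝ) 1 := fun x hx =>
    ⟨by linarith [hx.2], by linarith [hx.1]⟩
  have hreflect : ∀ x ∈ Ioo (-1 : ℝ) 1, -F (-x) ≤ 0 := by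
    refine nonpos_of_hasDerivAt_neg_mul_sq hκ (F := fun x => -F (-x)) (g := fun x => g (-x))
      (fun x hx => ?_)
      (fun x hx => by simpa using hg (-x) (hneg x hx))
    exact (((hF (-x) (hneg x hx)).comp x (hasDerivAt_neg x)).neg).congr_deriv (by ring)
  intro x hx
  have := hreflect (-x) (hneg x hx)
  rw [neg_neg] at this
  exact le_antisymm (nonpos_of_hasDerivAt_neg_mul_sq hκ hF hg x hx) (neg_nonpos.1 this)

def starWeight (a b x : ℝ) : ℝ := (1 - x) ^ b * (1 + x) ^ a

section starWeight

variable {a b x : ℝ}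

theorem starWeight_pos (hx : x ∈ Ioo (-1 : ℝ) 1) : 0 < starWeight a b x :=
  mul_pos (rpow_pos_of_pos (by linarith [hx.2]) _) (rpow_pos_of_pos (by linarith [hx.1]) _)

theorem starWeight_le (ha : 0 ≤ a) (hb : 0 ≤ b) (hx : x ∈ Ioo (-1 : ℝ) 1) :
    starWeight a b x ≤ 2 ^ b * 2 ^ a :=
  mul_le_mul (rpow_le_rpow (by linarith [hx.2]) (by linarith [hx.1]) hb)
    (rpow_le_rpow (by linarith [hx.1]) (by linarith [hx.2]) ha)
    (rpow_nonneg (by linarith [hx.1]) _) (rpow_nonneg (by norm_num) _)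

theorem hasDerivAt_starWeight (hx : x ∈ Ioo (-1 : ℝ) 1) :
    HasDerivAt (starWeight a b) ((a - b - (a + b) * x) / (1 - x ^ 2) * starWeight a b x) x := by
  have h₁ : 0 < 1 - x := by linarith [hx.2]
  have h₂ : 0 < 1 + x := by linarith [hx.1]
  have hd₁ := (hasDerivAt_rpow_const (p := b) (Or.inl h₁.ne')).comp x
    ((hasDerivAt_id x).const_sub 1)
  have hd₂ := (hasDerivAt_rpow_const (p := a) (Or.inl h₂.ne')).comp x
    ((hasDerivAt_id x).const_add 1)
  have h : 1 - x ^ 2 ≠ 0 := by nlinarith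
  refine (hd₁.mul hd₂).congr_deriv ?_
  simp only [Function.comp_apply, starWeight, rpow_sub_one h₁.ne', rpow_sub_one h₂.ne']
  field_simp
  ring

theorem hasDerivAt_starWeight_mul {V : ℝ → ℝ} {V' : ℝ} (hx : x ∈ Ioo (-1 : ℝ) 1)
    (hV : HasDerivAt V V' x)
    (hode : (1 - x ^ 2) * V' + (a - b - (a + b) * x) * V x + V x ^ 2 / 2 = 0) :
    HasDerivAt (fun y => starWeight a b y * V y)
      (-((2 * (1 - x ^ 2) * starWeight a b x)⁻¹ * (starWeight a b x * V x) ^ 2)) x := by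
  have h : 1 - x ^ 2 ≠ 0 := by nlinarith [hx.1, hx.2]
  refine ((hasDerivAt_starWeight hx).mul hV).congr_deriv ?_
  have hw := (starWeight_pos (a := a) (b := b) hx).ne'
  field_simp
  linear_combination 2 * hode

end starWeight

theorem eqOn_zero_of_bernoulli {a b : ℝ} (ha : 0 ≤ a) (hb : 0 ≤ b) {V : ℝ → ℝ}
    (hV : DifferentiableOn ℝ V (Ioo (-1) 1))
    (hode : ∀ x ∈ Ioo (-1 : ℝ) 1,
      (1 - x ^ 2) * deriv V x + (a - b - (a + b) * x) * V x + V x ^ 2 / 2 = 0) :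
    EqOn V 0 (Ioo (-1) 1) := by
  have hF : EqOn (fun y => starWeight a b y * V y) 0 (Ioo (-1) 1) := by
    refine eqOn_zero_of_hasDerivAt_neg_mul_sq (κ := (2 * (2 ^ b * 2 ^ a))⁻¹) (by positivity)
      (fun x hx => hasDerivAt_starWeight_mul hx
        ((hV.differentiableAt (isOpen_Ioo.mem_nhds hx)).hasDerivAt) (hode x hx)) fun x hx => ?_
    have h : 0 < 1 - x ^ 2 := by nlinarith [hx.1, hx.2]
    rw [div_eq_mul_inv, ← mul_inv]
    refine inv_anti₀ (by positivity [starWeight_pos (a := a) (b := b) hx]) ?_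
    calc 2 * (1 - x ^ 2) * starWeight a b x ≤ 2 * (1 - x ^ 2) * (2 ^ b * 2 ^ a) := by
          gcongr; exact starWeight_le ha hb hx
      _ = 2 * (2 ^ b * 2 ^ a) * (1 - x ^ 2) := by ring
  intro x hx
  simpa [(starWeight_pos hx).ne'] using hF hx

theorem starEq_sub {c₁ c₂ c₃ x : ℝ} {U U₀ : ℝ → ℝ} (hU : DifferentiableAt ℝ U x)
    (hU₀ : DifferentiableAt ℝ U₀ x) (h : StarEq c₁ c₂ c₃ U x) (h₀ : StarEq c₁ c₂ c₃ U₀ x) :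
    (1 - x ^ 2) * deriv (U - U₀) x + (2 * x + U₀ x) * (U - U₀) x + (U - U₀) x ^ 2 / 2 = 0 := by
  rw [deriv_sub hU hU₀]
  unfold StarEq at h h₀
  simp only [Pi.sub_apply]
  linear_combination h - h₀

theorem eqOn_of_isSolOn {c₁ c₂ c₃ a b : ℝ} (ha : 0 ≤ a) (hb : 0 ≤ b) {U U₀ : ℝ → ℝ}
    (hU : IsSolOn c₁ c₂ c₃ U (Ioo (-1) 1)) (hU₀ : IsSolOn c₁ c₂ c₃ U₀ (Ioo (-1) 1))
    (hlin : ∀ x, 2 * x + U₀ x = a - b - (a + b) * x) :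
    EqOn U U₀ (Ioo (-1) 1) := by
  have hdiff {W : ℝ → ℝ} (hW : IsSolOn c₁ c₂ c₃ W (Ioo (-1) 1)) :
      DifferentiableOn ℝ W (Ioo (-1) 1) :=
    hW.1.differentiableOn one_ne_zero
  have hV := eqOn_zero_of_bernoulli ha hb ((hdiff hU).sub (hdiff hU₀)) fun x hx => by
    have hd {W : ℝ → ℝ} (hW : IsSolOn c₁ c₂ c₃ W (Ioo (-1) 1)) : DifferentiableAt ℝ W x :=
      (hdiff hW).differentiableAt (isOpen_Ioo.mem_nhds hx)
    rw [← hlin x]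
    exact starEq_sub (hd hU) (hd hU₀) (hU.2 x hx) (hU₀.2 x hx)
  exact fun x hx => sub_eq_zero.1 (hV hx)

theorem isSolOn_linear {c₁ c₂ c₃ a b : ℝ} (ha : a ^ 2 = 1 + c₁) (hb : b ^ 2 = 1 + c₂)
    (hc₃ : c₃ = -(1 / 2) * (a + b) * (a + b + 2)) (s : Set ℝ) :
    IsSolOn c₁ c₂ c₃ (fun x => (1 + a) * (1 - x) + (-1 - b) * (1 + x)) s := by
  refine ⟨by fun_prop, fun x _ => ?_⟩
  have hd : HasDerivAt (fun x => (1 + a) * (1 - x) + (-1 - b) * (1 + x)) (-2 - a - b) x :=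
    ((((hasDerivAt_id x).const_sub 1).const_mul (1 + a)).add
      (((hasDerivAt_id x).const_add 1).const_mul (-1 - b))).congr_deriv (by ring)
  rw [StarEq, hd.deriv, hc₃]
  linear_combination (1 - x) * ha + (1 + x) * hb

/-- `U*` is the unique C¹ solution of (★) on (-1,1) when `c₃ = c̄₃(c₁,c₂)`. -/
theorem statement16 (c₁ c₂ c₃ : ℝ) (h1 : -1 ≤ c₁) (h2 : -1 ≤ c₂) (h3 : c₃ = cbar c₁ c₂) :
    IsSolOn c₁ c₂ c₃
      (fun x : ℝ => (1 + Real.sqrt (1 + c₁)) * (1 - x) + (-1 - Real.sqrt (1 + c₂)) * (1 + x))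
      (Ioo (-1 : ℝ) 1) ∧
    (∀ U : ℝ → ℝ, IsSolOn c₁ c₂ c₃ U (Ioo (-1 : ℝ) 1) →
      EqOn U
        (fun x : ℝ => (1 + Real.sqrt (1 + c₁)) * (1 - x) + (-1 - Real.sqrt (1 + c₂)) * (1 + x))
        (Ioo (-1 : ℝ) 1)) ∧
    (1 + Real.sqrt (1 + c₁)) * (1 - (-1 : ℝ)) + (-1 - Real.sqrt (1 + c₂)) * (1 + (-1 : ℝ))
      = tau2 c₁ ∧
    (1 + Real.sqrt (1 + c₁)) * (1 - (1 : ℝ)) + (-1 - Real.sqrt (1 + c₂)) * (1 + (1 : ℝ))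
      = tau1' c₂ := by
  have hsol := isSolOn_linear (sq_sqrt (by linarith : 0 ≤ 1 + c₁))
    (sq_sqrt (by linarith : 0 ≤ 1 + c₂)) h3 (Ioo (-1 : ℝ) 1)
  refine ⟨hsol, fun U hU => eqOn_of_isSolOn (sqrt_nonneg (1 + c₁)) (sqrt_nonneg (1 + c₂)) hU hsol
    fun x => by ring, by rw [tau2]; ring, by rw [tau1']; ring⟩
end
end
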